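/- arXiv:1410.3886 — 10 statements merged into one kernel-verified Lean document; each statement's English description precedes it below -/
import Mathlib

section
/- Let M ∈ ℝ^{n×n} be nonzero and let m > 0. Define q_{ij} = m·((‖M^i‖² + ‖M_j‖²)/(4n‖M‖_F²) + |M_{ij}|/(2‖M‖_{1,1})). Then for every i ∈ [n] with M^i ≠ 0 (so that q_{ij} > 0 for all j), one has ∑_{j=1}^n M_{ij}²/q_{ij} ≤ 4n·‖M‖_F²/m. -/
open Matrix

/-- Frobenius norm of a real matrix. -/
noncomputable def frobNorm {n₁ n₂ : ℕ} (A : Matrix (Fin n₁) (Fin n₂) ℝ) : ℝ :=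
  Real.sqrt (∑ i, ∑ j, (A i j) ^ 2)

/-- The LELA sampling weights `q_{ij}` for a square matrix `M` and sample budget `m`. -/
noncomputable def sampQ {n : ℕ} (M : Matrix (Fin n) (Fin n) ℝ) (m : ℝ) (i j : Fin n) : ℝ :=
  m * ((∑ k, (M i k) ^ 2 + ∑ k, (M k j) ^ 2) / (4 * n * frobNorm M ^ 2)
    + |M i j| / (2 * ∑ k, ∑ l, |M k l|))

theorem stmt3 {n : ℕ} (M : Matrix (Fin n) (Fin n) ℝ) (hM : M ≠ 0)
    (m : ℝ) (hm : 0 < m) (i : Fin n) (hi : M i ≠ 0) :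
    ∑ j, (M i j) ^ 2 / sampQ M m i j ≤ 4 * n * frobNorm M ^ 2 / m := by
  have hF2 : frobNorm M ^ 2 = ∑ a, ∑ b, (M a b) ^ 2 := by
    rw [frobNorm, Real.sq_sqrt]
    positivity
  set F : ℝ := frobNorm M ^ 2 with hFdef
  have hR : 0 < ∑ k, (M i k) ^ 2 := by
    obtain ⟨k, hk⟩ : ∃ k, M i k ≠ 0 := by
      by_contra h; push_neg at h; exact hi (funext h)
    exact Finset.sum_pos' (fun _ _ => sq_nonneg _)
      ⟨k, Finset.mem_univ k, by positivity⟩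
  have hFpos : 0 < F := by
    rw [hF2]
    exact Finset.sum_pos' (fun a _ => Finset.sum_nonneg fun b _ => sq_nonneg _)
      ⟨i, Finset.mem_univ i, hR⟩
  have hn : (0:ℝ) < n := by
    have : 0 < n := i.pos
    exact_mod_cast this
  set R : ℝ := ∑ k, (M i k) ^ 2 with hRdef
  have hlow : ∀ j, m * (R / (4 * n * F)) ≤ sampQ M m i j := by
    intro j
    rw [sampQ]
    have hS : 0 ≤ ∑ k, ∑ l, |M k l| :=
      Finset.sum_nonneg fun _ _ => Finset.sum_nonneg fun _ _ => abs_nonneg _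
    have h1 : R / (4 * n * F) ≤ (R + ∑ k, (M k j) ^ 2) / (4 * n * F) := by
      apply div_le_div_of_nonneg_right _ (by positivity)
      have : 0 ≤ ∑ k, (M k j) ^ 2 := Finset.sum_nonneg fun _ _ => sq_nonneg _
      linarith
    have h2 : 0 ≤ |M i j| / (2 * ∑ k, ∑ l, |M k l|) := by positivity
    exact mul_le_mul_of_nonneg_left (by linarith) hm.le
  have hqpos : 0 < m * (R / (4 * n * F)) := by positivity
  calc ∑ j, (M i j) ^ 2 / sampQ M m i j
      ≤ ∑ j, (M i j) ^ 2 / (m * (R / (4 * n * F))) := by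
        apply Finset.sum_le_sum
        intro j _
        exact div_le_div_of_nonneg_left (sq_nonneg _) hqpos (hlow j)
    _ = (∑ j, (M i j) ^ 2) / (m * (R / (4 * n * F))) := by
        rw [← Finset.sum_div]
    _ = 4 * n * F / m := by
        field_simp
        ring
end

section
/- Let M ∈ ℝ^{n×n} be nonzero, let M_r = U*Σ*(V*)^T satisfy the truncated-SVD hypotheses, and assume ‖M − M_r‖_F ≤ ‖M_r‖_F. Let m > 0 and define q_{ij} = m·((‖M^i‖² + ‖M_j‖²)/(4n‖M‖_F²) + |M_{ij}|/(2‖M‖_{1,1})). Then for all i, j ∈ [n]: m·σ_r²·‖(U*)^i‖² ≤ 8·n·r·σ_1²·q_{ij}, where (U*)^i denotes the i-th row of U*. -/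
set_option maxHeartbeats 1000000

open Matrix Finset

lemma aux_rowMr {n r : ℕ} (U V : Matrix (Fin n) (Fin r) ℝ) (σ : Fin r → ℝ)
    (hV : Vᵀ * V = 1) (a : Fin n) :
    ∑ b, ((U * Matrix.diagonal σ * Vᵀ) a b) ^ 2 = ∑ k, (σ k * U a k) ^ 2 := by
  have hentry : ∀ b, (U * Matrix.diagonal σ * Vᵀ) a b = ∑ k, (σ k * U a k) * V b k := by
    intro b
    rw [Matrix.mul_apply]
    simp only [Matrix.mul_diagonal, Matrix.transpose_apply]
    exact Finset.sum_congr rfl fun k _ => by ring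
  have hVkl : ∀ k l, ∑ b, V b k * V b l = if k = l then (1:ℝ) else 0 := by
    intro k l
    have := congrFun (congrFun hV k) l
    simpa [Matrix.mul_apply, Matrix.transpose_apply, Matrix.one_apply] using this
  calc ∑ b, ((U * Matrix.diagonal σ * Vᵀ) a b) ^ 2
      = ∑ b, ∑ k, ∑ l, ((σ k * U a k) * V b k) * ((σ l * U a l) * V b l) := by
        refine Finset.sum_congr rfl fun b _ => ?_
        rw [hentry, sq, Finset.sum_mul_sum]
    _ = ∑ k, ∑ l, ((σ k * U a k) * (σ l * U a l)) * ∑ b, V b k * V b l := by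
        rw [Finset.sum_comm]
        refine Finset.sum_congr rfl fun k _ => ?_
        rw [Finset.sum_comm]
        refine Finset.sum_congr rfl fun l _ => ?_
        rw [Finset.mul_sum]
        exact Finset.sum_congr rfl fun b _ => by ring
    _ = ∑ k, (σ k * U a k) ^ 2 := by
        refine Finset.sum_congr rfl fun k _ => ?_
        rw [Finset.sum_eq_single k]
        · rw [hVkl]; simp [sq]
        · intro l _ hl; rw [hVkl]; simp [hl.symm]
        · simp

lemma aux_rowcross {n r : ℕ} (U V : Matrix (Fin n) (Fin r) ℝ) (σ : Fin r → ℝ)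
    (E : Matrix (Fin n) (Fin n) ℝ) (hE : E * V = 0) (a : Fin n) :
    ∑ b, (U * Matrix.diagonal σ * Vᵀ) a b * E a b = 0 := by
  have hentry : ∀ b, (U * Matrix.diagonal σ * Vᵀ) a b = ∑ k, (σ k * U a k) * V b k := by
    intro b
    rw [Matrix.mul_apply]
    simp only [Matrix.mul_diagonal, Matrix.transpose_apply]
    exact Finset.sum_congr rfl fun k _ => by ring
  have hEV : ∀ k, ∑ b, E a b * V b k = 0 := by
    intro k
    have := congrFun (congrFun hE a) k
    simpa [Matrix.mul_apply] using this
  calc ∑ b, (U * Matrix.diagonal σ * Vᵀ) a b * E a b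
      = ∑ b, ∑ k, (σ k * U a k) * (E a b * V b k) := by
        refine Finset.sum_congr rfl fun b _ => ?_
        rw [hentry, Finset.sum_mul]
        exact Finset.sum_congr rfl fun k _ => by ring
    _ = ∑ k, (σ k * U a k) * ∑ b, E a b * V b k := by
        rw [Finset.sum_comm]
        exact Finset.sum_congr rfl fun k _ => by rw [Finset.mul_sum]
    _ = 0 := by simp [hEV]

theorem stmt4 {n r : ℕ} (hr : 0 < r)
    (M : Matrix (Fin n) (Fin n) ℝ) (hM : M ≠ 0)
    (Ustar Vstar : Matrix (Fin n) (Fin r) ℝ) (σ : Fin r → ℝ)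
    (hU : Ustarᵀ * Ustar = 1) (hV : Vstarᵀ * Vstar = 1)
    (hσmono : Antitone σ) (hσpos : ∀ k, 0 < σ k)
    (Mr : Matrix (Fin n) (Fin n) ℝ) (hMr : Mr = Ustar * Matrix.diagonal σ * Vstarᵀ)
    (hUperp : Ustarᵀ * (M - Mr) = 0) (hVperp : (M - Mr) * Vstar = 0)
    (hnoise : frobNorm (M - Mr) ≤ frobNorm Mr)
    (m : ℝ) (hm : 0 < m) (i j : Fin n) :
    m * (σ ⟨r - 1, by omega⟩) ^ 2 * (∑ k, (Ustar i k) ^ 2) ≤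
      8 * n * r * (σ ⟨0, hr⟩) ^ 2 * sampQ M m i j := by
  set E : Matrix (Fin n) (Fin n) ℝ := M - Mr with hE
  have hMab : ∀ a b, M a b = Mr a b + E a b := by intro a b; simp [hE]
  have hrowcross : ∀ a, ∑ b, Mr a b * E a b = 0 := by
    intro a; rw [hMr]; exact aux_rowcross Ustar Vstar σ E hVperp a
  have hrowMr : ∀ a, ∑ b, (Mr a b) ^ 2 = ∑ k, (σ k * Ustar a k) ^ 2 := by
    intro a; rw [hMr]; exact aux_rowMr Ustar Vstar σ hV a
  -- row decomposition
  have hrow : ∀ a, ∑ b, (M a b) ^ 2 = ∑ b, (Mr a b) ^ 2 + ∑ b, (E a b) ^ 2 := by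
    intro a
    have : ∀ b, (M a b) ^ 2 = (Mr a b) ^ 2 + 2 * (Mr a b * E a b) + (E a b) ^ 2 := by
      intro b; rw [hMab]; ring
    rw [Finset.sum_congr rfl fun b _ => this b, Finset.sum_add_distrib,
      Finset.sum_add_distrib, ← Finset.mul_sum, hrowcross, mul_zero, add_zero]
  set F2 : ℝ := ∑ a, ∑ b, (M a b) ^ 2 with hF2def
  have hF2 : F2 = ∑ a, ∑ b, (Mr a b) ^ 2 + ∑ a, ∑ b, (E a b) ^ 2 := by
    rw [hF2def, Finset.sum_congr rfl fun a _ => hrow a, Finset.sum_add_distrib]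
  have hfrobsq : ∀ (A : Matrix (Fin n) (Fin n) ℝ), frobNorm A ^ 2 = ∑ a, ∑ b, (A a b) ^ 2 := by
    intro A
    rw [frobNorm, Real.sq_sqrt]
    positivity
  have hnoise2 : ∑ a, ∑ b, (E a b) ^ 2 ≤ ∑ a, ∑ b, (Mr a b) ^ 2 := by
    rw [← hfrobsq, ← hfrobsq]
    exact pow_le_pow_left₀ (Real.sqrt_nonneg _) hnoise 2
  have hMr2 : ∑ a, ∑ b, (Mr a b) ^ 2 = ∑ k, (σ k) ^ 2 := by
    rw [Finset.sum_congr rfl fun a _ => hrowMr a, Finset.sum_comm]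
    refine Finset.sum_congr rfl fun k _ => ?_
    have hUk : ∑ a, (Ustar a k) ^ 2 = 1 := by
      have := congrFun (congrFun hU k) k
      simpa [Matrix.mul_apply, Matrix.transpose_apply, Matrix.one_apply, sq] using this
    calc ∑ a, (σ k * Ustar a k) ^ 2 = (σ k) ^ 2 * ∑ a, (Ustar a k) ^ 2 := by
          rw [Finset.mul_sum]; exact Finset.sum_congr rfl fun a _ => by ring
      _ = (σ k) ^ 2 := by rw [hUk, mul_one]
  set σr : ℝ := σ ⟨r - 1, by omega⟩ with hσr
  set σ1 : ℝ := σ ⟨0, hr⟩ with hσ1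
  have hσle : ∀ k, σr ≤ σ k ∧ σ k ≤ σ1 := by
    intro k
    constructor
    · refine hσmono ?_
      rw [Fin.le_def]; simp only [Fin.val_mk]
      have := k.isLt; omega
    · refine hσmono ?_
      rw [Fin.le_def]; simp only [Fin.val_mk]
      omega
  -- F2 ≤ 2 r σ1²
  have h3 : F2 ≤ 2 * r * σ1 ^ 2 := by
    have hsum : ∑ k, (σ k) ^ 2 ≤ r * σ1 ^ 2 := by
      calc ∑ k : Fin r, (σ k) ^ 2 ≤ ∑ _k : Fin r, σ1 ^ 2 :=
            Finset.sum_le_sum fun k _ =>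
              pow_le_pow_left₀ (hσpos k).le (hσle k).2 2
        _ = r * σ1 ^ 2 := by simp [mul_comm]
    have := hnoise2
    rw [hF2, hMr2] at *
    linarith
  -- σr² ∑ U i k² ≤ rowM
  set sU : ℝ := ∑ k, (Ustar i k) ^ 2 with hsU
  set rowM : ℝ := ∑ b, (M i b) ^ 2 with hrowM
  have h12 : σr ^ 2 * sU ≤ rowM := by
    have h1 : σr ^ 2 * sU ≤ ∑ k, (σ k * Ustar i k) ^ 2 := by
      rw [hsU, Finset.mul_sum]
      refine Finset.sum_le_sum fun k _ => ?_
      have : σr ^ 2 ≤ (σ k) ^ 2 := pow_le_pow_left₀ (hσpos _).le (hσle k).1 2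
      calc σr ^ 2 * (Ustar i k) ^ 2 ≤ (σ k) ^ 2 * (Ustar i k) ^ 2 :=
            mul_le_mul_of_nonneg_right this (sq_nonneg _)
        _ = (σ k * Ustar i k) ^ 2 := by ring
    have h2 : ∑ k, (σ k * Ustar i k) ^ 2 ≤ rowM := by
      rw [hrowM, hrow i, ← hrowMr i]
      have : 0 ≤ ∑ b, (E i b) ^ 2 := Finset.sum_nonneg fun b _ => sq_nonneg _
      linarith
    linarith
  -- positivity facts
  have hn : (0:ℝ) < n := by
    have := i.pos
    exact_mod_cast this
  have hF2pos : 0 < F2 := by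
    obtain ⟨a, ha⟩ := Function.ne_iff.mp hM
    obtain ⟨b, hb⟩ := Function.ne_iff.mp ha
    refine Finset.sum_pos' (fun a _ => Finset.sum_nonneg fun b _ => sq_nonneg _)
      ⟨a, Finset.mem_univ a, Finset.sum_pos' (fun b _ => sq_nonneg _)
        ⟨b, Finset.mem_univ b, by simp at hb; positivity⟩⟩
  have hrowMnonneg : 0 ≤ rowM := Finset.sum_nonneg fun b _ => sq_nonneg _
  have hσ1pos : 0 < σ1 := hσpos _
  have hrpos : (0:ℝ) < r := by exact_mod_cast hr
  -- lower bound sampQ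
  have hqlb : m * (rowM / (4 * n * F2)) ≤ sampQ M m i j := by
    rw [sampQ, hfrobsq M, ← hF2def, ← hrowM]
    refine mul_le_mul_of_nonneg_left ?_ hm.le
    have hT : 0 ≤ |M i j| / (2 * ∑ k, ∑ l, |M k l|) := by
      have : (0:ℝ) ≤ ∑ k, ∑ l, |M k l| :=
        Finset.sum_nonneg fun k _ => Finset.sum_nonneg fun l _ => abs_nonneg _
      positivity
    have hcol : (0:ℝ) ≤ ∑ k, (M k j) ^ 2 := Finset.sum_nonneg fun k _ => sq_nonneg _
    have hden : (0:ℝ) < 4 * n * F2 := by positivity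
    have hmono : rowM / (4 * (n:ℝ) * F2) ≤ (rowM + ∑ k, (M k j) ^ 2) / (4 * n * F2) := by
      gcongr
      linarith
    calc rowM / (4 * (n:ℝ) * F2) ≤ (rowM + ∑ k, (M k j) ^ 2) / (4 * n * F2) := hmono
      _ ≤ (rowM + ∑ k, (M k j) ^ 2) / (4 * n * F2) + |M i j| / (2 * ∑ k, ∑ l, |M k l|) :=
          le_add_of_nonneg_right hT
  -- final chain
  have hnonneg8 : (0:ℝ) ≤ 8 * n * r * σ1 ^ 2 := by positivity
  have hfinal : m * σr ^ 2 * sU ≤ 8 * n * r * σ1 ^ 2 * (m * (rowM / (4 * n * F2))) := by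
    have heq : 8 * (n:ℝ) * r * σ1 ^ 2 * (m * (rowM / (4 * n * F2)))
        = m * (2 * r * σ1 ^ 2 * rowM) / F2 := by
      field_simp
      ring
    rw [heq, le_div_iff₀ hF2pos]
    have key : σr ^ 2 * sU * F2 ≤ rowM * (2 * r * σ1 ^ 2) :=
      mul_le_mul h12 h3 (le_of_lt hF2pos) hrowMnonneg
    nlinarith [hm.le, key]
  calc m * σr ^ 2 * sU ≤ 8 * n * r * σ1 ^ 2 * (m * (rowM / (4 * n * F2))) := hfinal
    _ ≤ 8 * n * r * σ1 ^ 2 * sampQ M m i j := mul_le_mul_of_nonneg_left hqlb hnonneg8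
end

section
/- Let A ∈ ℝ^{n×d} and let U ∈ ℝ^{n×r} have orthonormal columns with A = U·U^T·A (the column space of A lies in the column span of U). Let M_r = U*Σ*(V*)^T where U* ∈ ℝ^{n×r} and V* ∈ ℝ^{d×r} have orthonormal columns and Σ* ∈ ℝ^{r×r} is diagonal with every diagonal entry at least σ_r > 0. Then ‖A − M_r‖ ≥ σ_r·‖(I − U·U^T)·U*‖, where ‖·‖ is the spectral norm. -/
open Matrix
open scoped RealInnerProductSpace

/-- Spectral norm (largest singular value) of a real matrix, as the operator
norm of the induced map between Euclidean spaces. -/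
noncomputable def specNorm {n₁ n₂ : ℕ} (A : Matrix (Fin n₁) (Fin n₂) ℝ) : ℝ :=
  ‖LinearMap.toContinuousLinearMap (Matrix.toEuclideanLin A)‖

lemma toEL_mul {a b c : ℕ} (A : Matrix (Fin a) (Fin b) ℝ) (B : Matrix (Fin b) (Fin c) ℝ)
    (v : EuclideanSpace ℝ (Fin c)) :
    toEuclideanLin (A * B) v = toEuclideanLin A (toEuclideanLin B v) := by
  simp [Matrix.toEuclideanLin_apply, Matrix.mulVec_mulVec]

lemma specNorm_le_bound {a b : ℕ} (A : Matrix (Fin a) (Fin b) ℝ) {c : ℝ} (hc : 0 ≤ c)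
    (h : ∀ v, ‖toEuclideanLin A v‖ ≤ c * ‖v‖) : specNorm A ≤ c :=
  ContinuousLinearMap.opNorm_le_bound _ hc h

lemma le_specNorm {a b : ℕ} (A : Matrix (Fin a) (Fin b) ℝ) (v : EuclideanSpace ℝ (Fin b)) :
    ‖toEuclideanLin A v‖ ≤ specNorm A * ‖v‖ :=
  (LinearMap.toContinuousLinearMap (Matrix.toEuclideanLin A)).le_opNorm v

lemma specNorm_nonneg {a b : ℕ} (A : Matrix (Fin a) (Fin b) ℝ) : 0 ≤ specNorm A :=
  norm_nonneg _

lemma specNorm_mul_le {a b c : ℕ} (A : Matrix (Fin a) (Fin b) ℝ) (B : Matrix (Fin b) (Fin c) ℝ) :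
    specNorm (A * B) ≤ specNorm A * specNorm B := by
  apply specNorm_le_bound _ (mul_nonneg (specNorm_nonneg A) (specNorm_nonneg B))
  intro v
  rw [toEL_mul]
  calc ‖toEuclideanLin A (toEuclideanLin B v)‖ ≤ specNorm A * ‖toEuclideanLin B v‖ :=
        le_specNorm A _
    _ ≤ specNorm A * (specNorm B * ‖v‖) :=
        mul_le_mul_of_nonneg_left (le_specNorm B v) (specNorm_nonneg A)
    _ = specNorm A * specNorm B * ‖v‖ := by ring

lemma specNorm_neg {a b : ℕ} (A : Matrix (Fin a) (Fin b) ℝ) :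
    specNorm (-A) = specNorm A := by
  unfold specNorm
  rw [map_neg, map_neg, norm_neg]

lemma inner_toEL {a b : ℕ} (A : Matrix (Fin a) (Fin b) ℝ) (v : EuclideanSpace ℝ (Fin b))
    (w : EuclideanSpace ℝ (Fin a)) :
    ⟪toEuclideanLin A v, w⟫ = ⟪v, toEuclideanLin Aᵀ w⟫ := by
  have h : Aᵀ = Aᴴ := by ext i j; simp [Matrix.conjTranspose_apply]
  rw [h, Matrix.toEuclideanLin_conjTranspose_eq_adjoint, LinearMap.adjoint_inner_right]

lemma norm_toEL_of_orth {a b : ℕ} (V : Matrix (Fin a) (Fin b) ℝ) (hV : Vᵀ * V = 1)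
    (v : EuclideanSpace ℝ (Fin b)) : ‖toEuclideanLin V v‖ = ‖v‖ := by
  have h : ⟪toEuclideanLin V v, toEuclideanLin V v⟫ = ⟪v, v⟫ := by
    rw [inner_toEL, ← toEL_mul, hV]
    simp [Matrix.toEuclideanLin_apply]
  have h1 := real_inner_self_eq_norm_sq (toEuclideanLin V v)
  have h2 := real_inner_self_eq_norm_sq v
  nlinarith [norm_nonneg (toEuclideanLin V v), norm_nonneg v]

lemma specNorm_orth_le_one {a b : ℕ} (V : Matrix (Fin a) (Fin b) ℝ) (hV : Vᵀ * V = 1) :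
    specNorm V ≤ 1 := by
  apply specNorm_le_bound _ zero_le_one
  intro v
  rw [norm_toEL_of_orth V hV, one_mul]

lemma specNorm_proj_le_one {a r : ℕ} (U : Matrix (Fin a) (Fin r) ℝ) (hU : Uᵀ * U = 1) :
    specNorm (1 - U * Uᵀ) ≤ 1 := by
  set P : Matrix (Fin a) (Fin a) ℝ := 1 - U * Uᵀ with hP
  have hPt : Pᵀ = P := by
    simp [hP, Matrix.transpose_sub, Matrix.transpose_mul]
  have hPP : P * P = P := by
    simp only [hP, Matrix.sub_mul, Matrix.mul_sub, Matrix.one_mul, Matrix.mul_one]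
    rw [Matrix.mul_assoc, ← Matrix.mul_assoc Uᵀ U Uᵀ, hU, Matrix.one_mul]
    abel
  apply specNorm_le_bound _ zero_le_one
  intro v
  rw [one_mul]
  have key : ⟪toEuclideanLin P v, toEuclideanLin P v⟫ = ⟪toEuclideanLin P v, v⟫ := by
    conv_lhs => rw [inner_toEL, hPt, ← toEL_mul, hPP]
    rw [real_inner_comm]
  have h1 := real_inner_self_eq_norm_sq (toEuclideanLin P v)
  have h2 := real_inner_le_norm (toEuclideanLin P v) v
  nlinarith [norm_nonneg (toEuclideanLin P v), norm_nonneg v]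

lemma specNorm_diag_le {a : ℕ} (τ : Fin a → ℝ) {c : ℝ} (hc : 0 ≤ c)
    (h : ∀ k, |τ k| ≤ c) : specNorm (Matrix.diagonal τ) ≤ c := by
  apply specNorm_le_bound _ hc
  intro v
  rw [Matrix.toEuclideanLin_apply, EuclideanSpace.norm_eq, EuclideanSpace.norm_eq]
  have step : ∑ i, ‖(WithLp.equiv 2 (Fin a → ℝ)).symm
      (Matrix.diagonal τ *ᵥ (WithLp.equiv 2 (Fin a → ℝ)) v) i‖ ^ 2
      ≤ ∑ i, c ^ 2 * ‖v i‖ ^ 2 := by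
    apply Finset.sum_le_sum
    intro i _
    have : (WithLp.equiv 2 (Fin a → ℝ)).symm
        (Matrix.diagonal τ *ᵥ (WithLp.equiv 2 (Fin a → ℝ)) v) i = τ i * v i := by
      simp [Matrix.mulVec_diagonal]
    rw [this]
    have hτ : (τ i) ^ 2 ≤ c ^ 2 := by nlinarith [h i, abs_nonneg (τ i), sq_abs (τ i), neg_abs_le (τ i), le_abs_self (τ i)]
    have := sq_nonneg (v i)
    simp only [Real.norm_eq_abs, sq_abs]
    nlinarith [sq_nonneg (v i), sq_nonneg (τ i)]
  calc Real.sqrt _ ≤ Real.sqrt (∑ i, c ^ 2 * ‖v i‖ ^ 2) := Real.sqrt_le_sqrt step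
    _ = c * Real.sqrt (∑ i, ‖v i‖ ^ 2) := by
        rw [← Finset.mul_sum, Real.sqrt_mul (sq_nonneg c), Real.sqrt_sq hc]

theorem stmt7 {n d r : ℕ}
    (A : Matrix (Fin n) (Fin d) ℝ)
    (U : Matrix (Fin n) (Fin r) ℝ) (hU : Uᵀ * U = 1) (hA : A = U * Uᵀ * A)
    (Ustar : Matrix (Fin n) (Fin r) ℝ) (Vstar : Matrix (Fin d) (Fin r) ℝ)
    (hUstar : Ustarᵀ * Ustar = 1) (hVstar : Vstarᵀ * Vstar = 1)
    (σ : Fin r → ℝ) (σr : ℝ) (hσr : 0 < σr) (hσ : ∀ k, σr ≤ σ k) :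
    σr * specNorm ((1 - U * Uᵀ) * Ustar) ≤
      specNorm (A - Ustar * Matrix.diagonal σ * Vstarᵀ) := by
  set P : Matrix (Fin n) (Fin n) ℝ := 1 - U * Uᵀ with hP
  set M : Matrix (Fin n) (Fin d) ℝ := Ustar * Matrix.diagonal σ * Vstarᵀ with hM
  have hPA : P * A = 0 := by
    rw [hP, Matrix.sub_mul, Matrix.one_mul, ← hA, sub_self]
  have hPM : P * (A - M) = -(P * Ustar * Matrix.diagonal σ * Vstarᵀ) := by
    rw [Matrix.mul_sub, hPA, zero_sub, hM]
    simp [Matrix.mul_assoc]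
  have hσne : ∀ k, σ k ≠ 0 := fun k => ne_of_gt (lt_of_lt_of_le hσr (hσ k))
  have hDinv : Matrix.diagonal σ * Matrix.diagonal (fun k => (σ k)⁻¹) = 1 := by
    rw [Matrix.diagonal_mul_diagonal, ← Matrix.diagonal_one]
    exact congrArg Matrix.diagonal (funext fun k => mul_inv_cancel₀ (hσne k))
  -- norm of diagonal of inverses
  have hdiaginv : specNorm (Matrix.diagonal (fun k => (σ k)⁻¹)) ≤ σr⁻¹ := by
    apply specNorm_diag_le _ (le_of_lt (inv_pos.mpr hσr))
    intro k
    rw [abs_of_pos (inv_pos.mpr (lt_of_lt_of_le hσr (hσ k)))]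
    exact inv_anti₀ hσr (hσ k)
  have e1 : specNorm (P * Ustar) ≤ specNorm (P * Ustar * Matrix.diagonal σ) * σr⁻¹ := by
    have : P * Ustar = P * Ustar * Matrix.diagonal σ * Matrix.diagonal (fun k => (σ k)⁻¹) := by
      rw [Matrix.mul_assoc (P * Ustar), hDinv, Matrix.mul_one]
    conv_lhs => rw [this]
    calc specNorm _ ≤ specNorm (P * Ustar * Matrix.diagonal σ) *
          specNorm (Matrix.diagonal (fun k => (σ k)⁻¹)) := specNorm_mul_le _ _
      _ ≤ specNorm (P * Ustar * Matrix.diagonal σ) * σr⁻¹ :=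
          mul_le_mul_of_nonneg_left hdiaginv (specNorm_nonneg _)
  have e2 : specNorm (P * Ustar * Matrix.diagonal σ) ≤
      specNorm (P * Ustar * Matrix.diagonal σ * Vstarᵀ) := by
    have : P * Ustar * Matrix.diagonal σ =
        P * Ustar * Matrix.diagonal σ * Vstarᵀ * Vstar := by
      rw [Matrix.mul_assoc _ Vstarᵀ Vstar, hVstar, Matrix.mul_one]
    conv_lhs => rw [this]
    calc specNorm _ ≤ specNorm (P * Ustar * Matrix.diagonal σ * Vstarᵀ) * specNorm Vstar :=
          specNorm_mul_le _ _
      _ ≤ specNorm (P * Ustar * Matrix.diagonal σ * Vstarᵀ) * 1 :=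
          mul_le_mul_of_nonneg_left (specNorm_orth_le_one Vstar hVstar) (specNorm_nonneg _)
      _ = _ := mul_one _
  have e3 : specNorm (P * Ustar * Matrix.diagonal σ * Vstarᵀ) = specNorm (P * (A - M)) := by
    rw [hPM, specNorm_neg]
  have e4 : specNorm (P * (A - M)) ≤ specNorm (A - M) := by
    calc specNorm (P * (A - M)) ≤ specNorm P * specNorm (A - M) := specNorm_mul_le _ _
      _ ≤ 1 * specNorm (A - M) :=
          mul_le_mul_of_nonneg_right (specNorm_proj_le_one U hU) (specNorm_nonneg _)
      _ = specNorm (A - M) := one_mul _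
  have key : specNorm (P * Ustar * Matrix.diagonal σ) ≤ specNorm (A - M) :=
    e2.trans (e3.le.trans e4)
  calc σr * specNorm (P * Ustar)
      ≤ σr * (specNorm (P * Ustar * Matrix.diagonal σ) * σr⁻¹) :=
        mul_le_mul_of_nonneg_left e1 hσr.le
    _ = specNorm (P * Ustar * Matrix.diagonal σ) := by
        field_simp
    _ ≤ specNorm (A - M) := key
end

section
/- Let U, U* ∈ ℝ^{n×r} have orthonormal columns, let V* ∈ ℝ^{d×r} have orthonormal columns, and let Σ* ∈ ℝ^{r×r} be diagonal with every diagonal entry at least σ_r > 0. Then for every unit vector x ∈ ℝ^r: ‖x^T·(U^T·U*·Σ*·(V*)^T)‖ ≥ σ_r·√(1 − ‖(I − U·U^T)·U*‖²); i.e., the smallest singular value of the r×d matrix U^TU*Σ*(V*)^T is at least σ_r·√(1 − ‖(I − UU^T)U*‖²). -/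
/-!
Write `A = Uᵀ U*` and `B = (I - U Uᵀ) U*`. Since `I - U Uᵀ` is an orthogonal projection and `U*`
is an isometry, `Bᵀ B = I - Aᵀ A`, so `‖A z‖² ≥ (1 - ‖B‖²) ‖z‖²`. Because `A` is square this lower
bound passes to `Aᵀ`: `A` is invertible, and for `x = A y` Cauchy–Schwarz applied to
`‖x‖² = ⟨y, Aᵀ x⟩` together with `‖x‖² ≥ (1 - ‖B‖²) ‖y‖²` bounds `‖Aᵀ x‖`. Finally `Σ*` stretches
every coordinate by at least `σ_r`, and `(V*)ᵀ` preserves norms of row vectors.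
-/

open Matrix

section DotProduct

variable {m n : Type*} [Fintype m] [Fintype n]

lemma sum_sq_eq_dotProduct_self (v : n → ℝ) : ∑ i, v i ^ 2 = v ⬝ᵥ v := by
  simp only [dotProduct, sq]

lemma dotProduct_self_nonneg (v : n → ℝ) : 0 ≤ v ⬝ᵥ v :=
  Finset.sum_nonneg fun i _ => mul_self_nonneg (v i)

lemma sq_dotProduct_le (u v : n → ℝ) : (u ⬝ᵥ v) ^ 2 ≤ (u ⬝ᵥ u) * (v ⬝ᵥ v) := by
  rw [← sum_sq_eq_dotProduct_self, ← sum_sq_eq_dotProduct_self]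
  exact Finset.sum_mul_sq_le_sq_mul_sq _ u v

lemma mulVec_dotProduct_mulVec_self (M : Matrix m n ℝ) (z : n → ℝ) :
    M *ᵥ z ⬝ᵥ M *ᵥ z = z ⬝ᵥ (Mᵀ * M) *ᵥ z := by
  rw [dotProduct_mulVec, ← mulVec_transpose, ← mulVec_mulVec, dotProduct_comm]

lemma mulVec_dotProduct_mulVec_self_of_transpose_mul_self_eq_one {M : Matrix m n ℝ}
    [DecidableEq n] (hM : Mᵀ * M = 1) (z : n → ℝ) : M *ᵥ z ⬝ᵥ M *ᵥ z = z ⬝ᵥ z := by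
  rw [mulVec_dotProduct_mulVec_self, hM, one_mulVec]

end DotProduct

lemma mulVec_dotProduct_mulVec_self_le_specNorm_sq {a b : ℕ} (M : Matrix (Fin a) (Fin b) ℝ)
    (z : Fin b → ℝ) : M *ᵥ z ⬝ᵥ M *ᵥ z ≤ specNorm M ^ 2 * (z ⬝ᵥ z) := by
  have hnorm (k : ℕ) (v : Fin k → ℝ) : ‖WithLp.toLp 2 v‖ ^ 2 = v ⬝ᵥ v := by
    rw [← real_inner_self_eq_norm_sq, EuclideanSpace.inner_toLp_toLp, star_trivial]
  have h := (LinearMap.toContinuousLinearMap (toEuclideanLin M)).le_opNorm (WithLp.toLp 2 z)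
  rw [← hnorm, ← hnorm, ← mul_pow]
  exact pow_le_pow_left₀ (norm_nonneg _) h 2

section Square

variable {n : Type*} [Fintype n] [DecidableEq n]

lemma le_vecMul_dotProduct_vecMul_self {A : Matrix n n ℝ} {c : ℝ}
    (h : ∀ z, c * (z ⬝ᵥ z) ≤ A *ᵥ z ⬝ᵥ A *ᵥ z) (x : n → ℝ) :
    c * (x ⬝ᵥ x) ≤ x ᵥ* A ⬝ᵥ x ᵥ* A := by
  rcases le_or_gt c 0 with hc | hc
  · nlinarith [dotProduct_self_nonneg x, dotProduct_self_nonneg (x ᵥ* A)]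
  have hinj : Function.Injective A.mulVec := fun z w hzw => by
    have hzw' := h (z - w)
    rw [mulVec_sub, hzw, sub_self, dotProduct_zero] at hzw'
    have : (z - w) ⬝ᵥ (z - w) = 0 := by nlinarith [dotProduct_self_nonneg (z - w)]
    exact sub_eq_zero.1 (dotProduct_self_eq_zero.1 this)
  obtain ⟨y, rfl⟩ := mulVec_surjective_iff_isUnit.2 (mulVec_injective_iff_isUnit.1 hinj) x
  have hcs := sq_dotProduct_le ((A *ᵥ y) ᵥ* A) y
  rw [← dotProduct_mulVec (A *ᵥ y) A y] at hcs
  set s := A *ᵥ y ⬝ᵥ A *ᵥ y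
  set t := (A *ᵥ y) ᵥ* A ⬝ᵥ (A *ᵥ y) ᵥ* A
  have key : c * s * s ≤ t * s :=
    calc c * s * s = c * s ^ 2 := by ring
      _ ≤ c * (t * (y ⬝ᵥ y)) := by gcongr
      _ = t * (c * (y ⬝ᵥ y)) := by ring
      _ ≤ t * s := by gcongr; exacts [dotProduct_self_nonneg _, h y]
  rcases (show 0 ≤ s from dotProduct_self_nonneg _).eq_or_lt with hs | hs
  · rw [← hs, mul_zero]
    exact dotProduct_self_nonneg _
  · exact le_of_mul_le_mul_right key hs

lemma sq_mul_le_vecMul_diagonal_dotProduct_self {σ : n → ℝ} {s : ℝ} (hs : 0 ≤ s)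
    (hσ : ∀ k, s ≤ σ k) (y : n → ℝ) :
    s ^ 2 * (y ⬝ᵥ y) ≤ y ᵥ* diagonal σ ⬝ᵥ y ᵥ* diagonal σ := by
  simp only [dotProduct, vecMul_diagonal, Finset.mul_sum]
  refine Finset.sum_le_sum fun k _ => ?_
  nlinarith [pow_le_pow_left₀ hs (hσ k) 2, mul_self_nonneg (y k)]

end Square

lemma transpose_mul_self_one_sub_mul_transpose_mul {m n : Type*} [Fintype m] [Fintype n]
    [DecidableEq m] [DecidableEq n] {U W : Matrix m n ℝ} (hU : Uᵀ * U = 1) (hW : Wᵀ * W = 1) :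
    ((1 - U * Uᵀ) * W)ᵀ * ((1 - U * Uᵀ) * W) = 1 - (Uᵀ * W)ᵀ * (Uᵀ * W) := by
  have hproj : U * Uᵀ * (U * Uᵀ) = U * Uᵀ := by
    rw [Matrix.mul_assoc, ← Matrix.mul_assoc Uᵀ, hU, Matrix.one_mul]
  have hidem : (1 - U * Uᵀ) * (1 - U * Uᵀ) = 1 - U * Uᵀ := by
    simp [Matrix.mul_sub, Matrix.sub_mul, hproj]
  calc ((1 - U * Uᵀ) * W)ᵀ * ((1 - U * Uᵀ) * W) = Wᵀ * ((1 - U * Uᵀ) * (1 - U * Uᵀ)) * W := by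
        simp [transpose_mul, Matrix.mul_assoc]
    _ = 1 - (Uᵀ * W)ᵀ * (Uᵀ * W) := by
        simp [hidem, Matrix.mul_sub, Matrix.sub_mul, hW, transpose_mul, Matrix.mul_assoc]

lemma one_sub_specNorm_sq_mul_le {n r : ℕ} {U W : Matrix (Fin n) (Fin r) ℝ}
    (hU : Uᵀ * U = 1) (hW : Wᵀ * W = 1) (z : Fin r → ℝ) :
    (1 - specNorm ((1 - U * Uᵀ) * W) ^ 2) * (z ⬝ᵥ z) ≤ (Uᵀ * W) *ᵥ z ⬝ᵥ (Uᵀ * W) *ᵥ z := by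
  have h := mulVec_dotProduct_mulVec_self_le_specNorm_sq ((1 - U * Uᵀ) * W) z
  rw [mulVec_dotProduct_mulVec_self, transpose_mul_self_one_sub_mul_transpose_mul hU hW,
    sub_mulVec, one_mulVec, dotProduct_sub, ← mulVec_dotProduct_mulVec_self] at h
  linarith

theorem stmt8 {n d r : ℕ}
    (U Ustar : Matrix (Fin n) (Fin r) ℝ) (Vstar : Matrix (Fin d) (Fin r) ℝ)
    (hU : Uᵀ * U = 1) (hUstar : Ustarᵀ * Ustar = 1) (hVstar : Vstarᵀ * Vstar = 1)
    (σ : Fin r → ℝ) (σr : ℝ) (hσr : 0 < σr) (hσ : ∀ k, σr ≤ σ k)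
    (x : Fin r → ℝ) (hx : ∑ k, (x k) ^ 2 = 1) :
    σr * Real.sqrt (1 - specNorm ((1 - U * Uᵀ) * Ustar) ^ 2) ≤
      Real.sqrt (∑ j, (Matrix.vecMul x (Uᵀ * Ustar * Matrix.diagonal σ * Vstarᵀ) j) ^ 2) := by
  have hxA := le_vecMul_dotProduct_vecMul_self (one_sub_specNorm_sq_mul_le hU hUstar) x
  rw [sum_sq_eq_dotProduct_self] at hx ⊢
  calc σr * Real.sqrt (1 - specNorm ((1 - U * Uᵀ) * Ustar) ^ 2)
      = Real.sqrt (σr ^ 2 * ((1 - specNorm ((1 - U * Uᵀ) * Ustar) ^ 2) * (x ⬝ᵥ x))) := by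
        rw [hx, mul_one, Real.sqrt_mul (sq_nonneg σr), Real.sqrt_sq hσr.le]
    _ ≤ Real.sqrt (x ᵥ* (Uᵀ * Ustar) ᵥ* diagonal σ ⬝ᵥ x ᵥ* (Uᵀ * Ustar) ᵥ* diagonal σ) := by
        gcongr
        exact (mul_le_mul_of_nonneg_left hxA (sq_nonneg σr)).trans
          (sq_mul_le_vecMul_diagonal_dotProduct_self hσr.le hσ _)
    _ = _ := by
        rw [← vecMul_vecMul x _ Vstarᵀ, ← vecMul_vecMul x _ (diagonal σ), vecMul_transpose,
          mulVec_dotProduct_mulVec_self_of_transpose_mul_self_eq_one hVstar]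
end

section
/- Let n ≥ 1, m > 0, c_1 ≥ 1, and let q̂_{ij} ∈ (0,1] for all i, j ∈ [n]. Let N ∈ ℝ^{n×n} and let u ∈ ℝ^n be a unit vector satisfying u_i² ≤ (4n·c_1²/m)·q̂_{ij} for all i, j. Let (δ_{ij})_{i,j∈[n]} be independent {0,1}-valued random variables with P(δ_{ij}=1) = q̂_{ij}, and let R be the random matrix with R_{ij} = δ_{ij}·N_{ij}/q̂_{ij}. Then for every δ > 0: P( ‖u^T R − u^T N‖ > δ·‖N‖_F ) ≤ 4n·c_1²/(m·δ²), where the norm of a row vector is the Euclidean norm. -/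
/-!
Column `j` of `uᵀR - uᵀN` is `∑ i, a i j * (δ i j - q̂ i j)` with `a i j = u i * N i j / q̂ i j`,
a centred sum of independent Bernoulli variables, so its second moment is
`∑ i, a i j ^ 2 * q̂ i j * (1 - q̂ i j)`. The hypothesis `u i ^ 2 ≤ K * q̂ i j` with
`K = 4 n c₁² / m` bounds each term by `K * N i j ^ 2`, hence `E ‖uᵀR - uᵀN‖² ≤ K ‖N‖_F²`, and
Markov's inequality for `‖uᵀR - uᵀN‖²` at level `δ² ‖N‖_F²` gives the claim.
-/

open Matrix MeasureTheory ProbabilityTheory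

section ZeroOne

variable {Ω : Type*} [MeasurableSpace Ω] {μ : Measure Ω} {X : Ω → ℝ} {q : ℝ}

lemma memLp_of_zero_one [IsFiniteMeasure μ] (hX : Measurable X)
    (h01 : ∀ ω, X ω = 0 ∨ X ω = 1) (p : ENNReal) : MemLp X p μ :=
  MemLp.of_bound hX.aestronglyMeasurable 1 <| ae_of_all _ fun ω => by
    rcases h01 ω with h | h <;> simp [h]

lemma integral_of_zero_one (hX : Measurable X) (h01 : ∀ ω, X ω = 0 ∨ X ω = 1)
    (hq : 0 ≤ q) (hP : μ {ω | X ω = 1} = ENNReal.ofReal q) : μ[X] = q := by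
  have hX_eq : X = {ω | X ω = 1}.indicator 1 := by
    funext ω
    rcases h01 ω with h | h <;> simp [Set.indicator, h]
  have hmeas : MeasurableSet {ω | X ω = 1} := hX (measurableSet_singleton 1)
  rw [hX_eq, integral_indicator_one hmeas, measureReal_def, hP, ENNReal.toReal_ofReal hq]

lemma variance_of_zero_one [IsProbabilityMeasure μ] (hX : Measurable X)
    (h01 : ∀ ω, X ω = 0 ∨ X ω = 1) (hq : 0 ≤ q) (hP : μ {ω | X ω = 1} = ENNReal.ofReal q) :
    Var[X; μ] = q * (1 - q) := by
  have hX_sq : X ^ 2 = X := by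
    funext ω
    rcases h01 ω with h | h <;> simp [h]
  rw [variance_eq_sub (memLp_of_zero_one hX h01 2), hX_sq, integral_of_zero_one hX h01 hq hP]
  ring

end ZeroOne

section WeightedSum

variable {Ω ι : Type*} [MeasurableSpace Ω] {μ : Measure Ω} [IsProbabilityMeasure μ] [Fintype ι]
  {X : ι → Ω → ℝ} {q : ι → ℝ}

lemma memLp_sum_mul_sub (hX : ∀ i, Measurable (X i)) (h01 : ∀ i ω, X i ω = 0 ∨ X i ω = 1)
    (a : ι → ℝ) (c : ℝ) : MemLp (fun ω => ∑ i, a i * X i ω - c) 2 μ :=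
  (memLp_finsetSum _ fun i _ => (memLp_of_zero_one (hX i) (h01 i) 2).const_mul (a i)).sub
    (memLp_const c)

lemma integral_sq_sum_mul_sub (hX : ∀ i, Measurable (X i))
    (h01 : ∀ i ω, X i ω = 0 ∨ X i ω = 1) (hind : iIndepFun X μ) (hq : ∀ i, 0 ≤ q i)
    (hP : ∀ i, μ {ω | X i ω = 1} = ENNReal.ofReal (q i)) (a : ι → ℝ) :
    ∫ ω, (∑ i, a i * X i ω - ∑ i, a i * q i) ^ 2 ∂μ = ∑ i, a i ^ 2 * (q i * (1 - q i)) := by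
  set Y : ι → Ω → ℝ := fun i ω => a i * X i ω
  have hY : ∀ i, MemLp (Y i) 2 μ := fun i => (memLp_of_zero_one (hX i) (h01 i) 2).const_mul (a i)
  have hmean : μ[∑ i, Y i] = ∑ i, a i * q i := by
    simp only [Finset.sum_apply]
    rw [integral_finsetSum _ fun i _ => (hY i).integrable one_le_two]
    simp_rw [Y, integral_const_mul, integral_of_zero_one (hX _) (h01 _) (hq _) (hP _)]
  have hvar : Var[∑ i, Y i; μ] = ∑ i, a i ^ 2 * (q i * (1 - q i)) := by
    rw [IndepFun.variance_sum (fun i _ => hY i) fun i _ j _ hij =>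
      (hind.indepFun hij).comp (measurable_const_mul (a i)) (measurable_const_mul (a j))]
    simp_rw [Y, variance_const_mul, variance_of_zero_one (hX _) (h01 _) (hq _) (hP _)]
  have hYm : AEMeasurable (∑ i, Y i) μ := Finset.aemeasurable_sum _ fun i _ => (hY i).aemeasurable
  rw [← hvar, variance_eq_integral hYm, hmean]
  simp [Y]

end WeightedSum

lemma measure_mul_lt_le_ofReal_div {Ω : Type*} [MeasurableSpace Ω] {μ : Measure Ω}
    [IsFiniteMeasure μ] {f : Ω → ℝ} (hf : 0 ≤ f) (hfi : Integrable f μ) {K c t : ℝ}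
    (hc : 0 ≤ c) (ht : 0 < t) (h : ∫ ω, f ω ∂μ ≤ K * c) :
    μ {ω | t * c < f ω} ≤ ENNReal.ofReal (K / t) := by
  rcases hc.eq_or_lt with rfl | hc
  · have hf0 : f =ᵐ[μ] 0 :=
      (integral_eq_zero_iff_of_nonneg hf hfi).1
        (le_antisymm (by simpa using h) (integral_nonneg hf))
    have hnull : μ {ω | t * 0 < f ω} = 0 :=
      measure_mono_null (fun ω (hω : t * 0 < f ω) => by simp only [mul_zero] at hω; exact hω.ne')
        (ae_iff.1 hf0)
    rw [hnull]
    exact zero_le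
  · have htc : 0 < t * c := mul_pos ht hc
    have hmarkov := mul_meas_ge_le_integral_of_nonneg (ae_of_all _ hf) hfi (t * c)
    calc μ {ω | t * c < f ω} ≤ μ {ω | t * c ≤ f ω} :=
          measure_mono fun ω (hω : t * c < f ω) => hω.le
      _ = ENNReal.ofReal (μ.real {ω | t * c ≤ f ω}) := (ofReal_measureReal).symm
      _ ≤ ENNReal.ofReal (K / t) := by
        refine ENNReal.ofReal_le_ofReal ?_
        rw [le_div_iff₀ ht, ← mul_le_mul_iff_of_pos_right hc]
        nlinarith

lemma sq_mul_div_mul_one_sub_le {u x q K : ℝ} (hq0 : 0 < q) (hq1 : q ≤ 1) (hu : u ^ 2 ≤ K * q) :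
    (u * x / q) ^ 2 * (q * (1 - q)) ≤ K * x ^ 2 := by
  have hK : 0 ≤ K := nonneg_of_mul_nonneg_left ((sq_nonneg u).trans hu) hq0
  have hlhs : (u * x / q) ^ 2 * (q * (1 - q)) = u ^ 2 * x ^ 2 * (1 - q) / q := by
    field_simp
  rw [hlhs, div_le_iff₀ hq0]
  nlinarith [mul_le_mul_of_nonneg_right hu (mul_nonneg (sq_nonneg x) (sub_nonneg.2 hq1)),
    mul_nonneg (mul_nonneg hK (sq_nonneg x)) (mul_nonneg hq0.le hq0.le)]

lemma frobNorm_sq {n₁ n₂ : ℕ} (A : Matrix (Fin n₁) (Fin n₂) ℝ) :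
    frobNorm A ^ 2 = ∑ i, ∑ j, A i j ^ 2 :=
  Real.sq_sqrt (Finset.sum_nonneg fun _ _ => Finset.sum_nonneg fun _ _ => sq_nonneg _)

theorem stmt9_general {n : ℕ} (m c1 : ℝ)
    (qhat : Fin n → Fin n → ℝ) (hq : ∀ i j, qhat i j ∈ Set.Ioc (0 : ℝ) 1)
    (N : Matrix (Fin n) (Fin n) ℝ)
    (u : Fin n → ℝ)
    (hub : ∀ i j, (u i) ^ 2 ≤ (4 * n * c1 ^ 2 / m) * qhat i j)
    {Ω : Type*} [MeasureSpace Ω] [IsProbabilityMeasure (ℙ : Measure Ω)]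
    (X : Fin n × Fin n → Ω → ℝ)
    (hmeas : ∀ p, Measurable (X p))
    (hval : ∀ p ω, X p ω = 0 ∨ X p ω = 1)
    (hind : iIndepFun X ℙ)
    (hX : ∀ p, ℙ {ω | X p ω = 1} = ENNReal.ofReal (qhat p.1 p.2))
    (δ : ℝ) (hδ : 0 < δ) :
    ℙ {ω | δ * frobNorm N <
        Real.sqrt (∑ j, ((∑ i, u i * (X (i, j) ω * N i j / qhat i j))
          - ∑ i, u i * N i j) ^ 2)} ≤
      ENNReal.ofReal (4 * n * c1 ^ 2 / (m * δ ^ 2)) := by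
  set K := 4 * n * c1 ^ 2 / m
  set a : Fin n → Fin n → ℝ := fun i j => u i * N i j / qhat i j
  set S : Fin n → Ω → ℝ := fun j ω => ∑ i, a i j * X (i, j) ω - ∑ i, a i j * qhat i j
  have hS : ∀ j ω, (∑ i, u i * (X (i, j) ω * N i j / qhat i j)) - ∑ i, u i * N i j = S j ω := by
    intro j ω
    congr 1 <;> refine Finset.sum_congr rfl fun i _ => ?_ <;> simp only [a]
    · ring
    · field_simp [(hq i j).1.ne']
  have hcol : ∀ j, iIndepFun (fun i => X (i, j)) ℙ := fun j =>
    hind.precomp fun i i' h => (Prod.ext_iff.1 h).1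
  have hSint : ∀ j, Integrable (fun ω => S j ω ^ 2) ℙ := fun j =>
    (memLp_sum_mul_sub (fun i => hmeas (i, j)) (fun i => hval (i, j)) _ _).integrable_sq
  have hES : ∀ j, ∫ ω, S j ω ^ 2 ≤ ∑ i, K * N i j ^ 2 := fun j => by
    rw [integral_sq_sum_mul_sub (fun i => hmeas (i, j)) (fun i => hval (i, j)) (hcol j)
      (fun i => (hq i j).1.le) (fun i => hX (i, j))]
    exact Finset.sum_le_sum fun i _ => sq_mul_div_mul_one_sub_le (hq i j).1 (hq i j).2 (hub i j)
  have hE : ∫ ω, ∑ j, S j ω ^ 2 ≤ K * frobNorm N ^ 2 := by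
    rw [integral_finsetSum _ fun j _ => hSint j, frobNorm_sq, Finset.sum_comm, Finset.mul_sum]
    exact Finset.sum_le_sum fun j _ => (hES j).trans_eq (Finset.mul_sum _ _ _).symm
  have hevent : {ω | δ * frobNorm N <
      Real.sqrt (∑ j, ((∑ i, u i * (X (i, j) ω * N i j / qhat i j)) - ∑ i, u i * N i j) ^ 2)} =
      {ω | δ ^ 2 * frobNorm N ^ 2 < ∑ j, S j ω ^ 2} := by
    ext ω
    simp only [Set.mem_ofPred_eq, hS, ← mul_pow]
    exact Real.lt_sqrt (mul_nonneg hδ.le (Real.sqrt_nonneg _))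
  rw [hevent, ← div_div]
  exact measure_mul_lt_le_ofReal_div (fun ω => Finset.sum_nonneg fun j _ => sq_nonneg (S j ω))
    (integrable_finsetSum _ fun j _ => hSint j) (sq_nonneg _) (by positivity) hE

theorem stmt9 {n : ℕ} (hn : 1 ≤ n) (m c1 : ℝ) (hm : 0 < m) (hc1 : 1 ≤ c1)
    (qhat : Fin n → Fin n → ℝ) (hq : ∀ i j, qhat i j ∈ Set.Ioc (0 : ℝ) 1)
    (N : Matrix (Fin n) (Fin n) ℝ)
    (u : Fin n → ℝ) (hu : ∑ i, (u i) ^ 2 = 1)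
    (hub : ∀ i j, (u i) ^ 2 ≤ (4 * n * c1 ^ 2 / m) * qhat i j)
    {Ω : Type*} [MeasureSpace Ω] [IsProbabilityMeasure (ℙ : Measure Ω)]
    (X : Fin n × Fin n → Ω → ℝ)
    (hmeas : ∀ p, Measurable (X p))
    (hval : ∀ p ω, X p ω = 0 ∨ X p ω = 1)
    (hind : iIndepFun X ℙ)
    (hX : ∀ p, ℙ {ω | X p ω = 1} = ENNReal.ofReal (qhat p.1 p.2))
    (δ : ℝ) (hδ : 0 < δ) :
    ℙ {ω | δ * frobNorm N <
        Real.sqrt (∑ j, ((∑ i, u i * (X (i, j) ω * N i j / qhat i j))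
          - ∑ i, u i * N i j) ^ 2)} ≤
      ENNReal.ofReal (4 * n * c1 ^ 2 / (m * δ ^ 2)) :=
  stmt9_general m c1 qhat hq N u hub X hmeas hval hind hX δ hδ
end

section
/- Let n ≥ 1, m > 0, and fix i ∈ [n]. Let q̂_{ij} ∈ (0,1] for all j ∈ [n], and let u* ∈ ℝ^n be a unit vector satisfying (u*_j)² ≤ (16n/m)·q̂_{ij} for all j. Let (δ_{ij})_{j∈[n]} be independent {0,1}-valued random variables with P(δ_{ij}=1) = q̂_{ij}. Then for every δ_1 ∈ (0, 3]: P( |∑_{j=1}^n δ_{ij}·(u*_j)²/q̂_{ij} − 1| > δ_1 ) ≤ 2·exp(−δ_1²·m/(64n)). -/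
open MeasureTheory ProbabilityTheory

/-! Chernoff's method for `S = ∑ δ_j c_j` with weights `0 ≤ c_j ≤ b`, `b = 16n/m`, where
`c_j = (u*_j)² / q̂_j`, so that `𝔼 S = 1` and `∑ q̂_j c_j² ≤ b`. Each factor of the moment
generating function is `1 + q̂_j (e^{s c_j} - 1) ≤ exp (q̂_j (e^{s c_j} - 1))`, and for `|s c_j| ≤ 1`
the bound `e^x ≤ 1 + x + ¾ x²` gives `mgf S s ≤ exp (s + ¾ s² b)`. The choice `s = ±δ₁/(3b)`,
admissible exactly because `δ₁ ≤ 3`, makes both tail exponents `-δ₁ s + ¾ s² b = -δ₁²/(4b)`. -/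

lemma Real.exp_le_one_add_add_three_quarters_mul_sq {x : ℝ} (hx : |x| ≤ 1) :
    Real.exp x ≤ 1 + x + 3 / 4 * x ^ 2 := by
  have h := Real.exp_bound hx (n := 3) (by norm_num)
  have h2 : ∑ k ∈ Finset.range 3, x ^ k / k.factorial = 1 + x + x ^ 2 / 2 := by
    simp [Finset.sum_range_succ]
  have h3 : |x| ^ 3 = |x| * x ^ 2 := by rw [pow_succ' |x| 2, sq_abs]
  have := (abs_sub_le_iff.1 h).1
  rw [h2, h3] at this
  norm_num [Nat.factorial] at this
  nlinarith [abs_nonneg x, mul_le_of_le_one_left (sq_nonneg x) hx]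

lemma exp_mul_mul_eq_indicator {Ω : Type*} {X : Ω → ℝ} (hval : ∀ ω, X ω = 0 ∨ X ω = 1) (c s : ℝ) :
    (fun ω => Real.exp (s * (X ω * c))) =
      fun ω => 1 + (Real.exp (s * c) - 1) * {ω | X ω = 1}.indicator 1 ω := by
  funext ω
  rcases hval ω with h | h <;> simp [h]

lemma sum_mul_sq_le_mul_sum_mul {ι : Type*} [Fintype ι] {p c : ι → ℝ} {b : ℝ}
    (hp : ∀ j, 0 ≤ p j) (hc0 : ∀ j, 0 ≤ c j) (hcb : ∀ j, c j ≤ b) :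
    ∑ j, p j * c j ^ 2 ≤ b * ∑ j, p j * c j := by
  rw [Finset.mul_sum]
  exact Finset.sum_le_sum fun j _ => by
    nlinarith [mul_le_mul_of_nonneg_left (hcb j) (mul_nonneg (hp j) (hc0 j))]

section BernoulliChernoff

variable {Ω : Type*} [MeasurableSpace Ω] {μ : Measure Ω}

lemma measureReal_lt_abs_sub_le [IsFiniteMeasure μ] {S : Ω → ℝ} {a t K : ℝ} (ht : 0 ≤ t)
    (hint : Integrable (fun ω => Real.exp (t * S ω)) μ)
    (hint_neg : Integrable (fun ω => Real.exp (-t * S ω)) μ)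
    (hmgf : mgf S μ t ≤ Real.exp (t * a + K)) (hmgf_neg : mgf S μ (-t) ≤ Real.exp (-t * a + K))
    (δ : ℝ) :
    μ.real {ω | δ < |S ω - a|} ≤ 2 * Real.exp (-t * δ + K) := by
  have hupper : μ.real {ω | a + δ ≤ S ω} ≤ Real.exp (-t * δ + K) :=
    calc μ.real {ω | a + δ ≤ S ω} ≤ Real.exp (-t * (a + δ)) * mgf S μ t :=
          measure_ge_le_exp_mul_mgf _ ht hint
      _ ≤ Real.exp (-t * (a + δ)) * Real.exp (t * a + K) := by gcongr
      _ = Real.exp (-t * δ + K) := by rw [← Real.exp_add]; ring_nf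
  have hlower : μ.real {ω | S ω ≤ a - δ} ≤ Real.exp (-t * δ + K) :=
    calc μ.real {ω | S ω ≤ a - δ} ≤ Real.exp (- -t * (a - δ)) * mgf S μ (-t) :=
          measure_le_le_exp_mul_mgf _ (neg_nonpos.2 ht) hint_neg
      _ ≤ Real.exp (- -t * (a - δ)) * Real.exp (-t * a + K) := by gcongr
      _ = Real.exp (-t * δ + K) := by rw [← Real.exp_add]; ring_nf
  have hsub : {ω | δ < |S ω - a|} ⊆ {ω | a + δ ≤ S ω} ∪ {ω | S ω ≤ a - δ} := by
    intro ω (hω : δ < |S ω - a|)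
    rcases lt_abs.1 hω with h | h
    · exact Or.inl (show a + δ ≤ S ω by linarith)
    · exact Or.inr (show S ω ≤ a - δ by linarith)
  calc μ.real {ω | δ < |S ω - a|} ≤ μ.real ({ω | a + δ ≤ S ω} ∪ {ω | S ω ≤ a - δ}) :=
        measureReal_mono hsub
    _ ≤ μ.real {ω | a + δ ≤ S ω} + μ.real {ω | S ω ≤ a - δ} := measureReal_union_le _ _
    _ ≤ 2 * Real.exp (-t * δ + K) := by linarith

lemma integrable_exp_mul_mul_of_zero_or_one [IsFiniteMeasure μ] {X : Ω → ℝ}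
    (hX : Measurable X) (hval : ∀ ω, X ω = 0 ∨ X ω = 1) (c s : ℝ) :
    Integrable (fun ω => Real.exp (s * (X ω * c))) μ := by
  rw [exp_mul_mul_eq_indicator hval]
  exact (integrable_const 1).add
    (((integrable_const 1).indicator (hX (measurableSet_singleton 1))).const_mul _)

lemma mgf_mul_const_of_zero_or_one [IsProbabilityMeasure μ] {X : Ω → ℝ}
    (hX : Measurable X) (hval : ∀ ω, X ω = 0 ∨ X ω = 1) (c s : ℝ) :
    mgf (fun ω => X ω * c) μ s = 1 + μ.real {ω | X ω = 1} * (Real.exp (s * c) - 1) := by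
  have hset : MeasurableSet {ω | X ω = 1} := hX (measurableSet_singleton 1)
  rw [mgf, exp_mul_mul_eq_indicator hval,
    integral_add (integrable_const 1) (((integrable_const 1).indicator hset).const_mul _),
    integral_const_mul, integral_indicator_one hset]
  simp [mul_comm]

lemma mgf_mul_const_le_of_zero_or_one [IsProbabilityMeasure μ] {X : Ω → ℝ}
    (hX : Measurable X) (hval : ∀ ω, X ω = 0 ∨ X ω = 1) {c s : ℝ} (hsc : |s * c| ≤ 1) :
    mgf (fun ω => X ω * c) μ s ≤
      Real.exp (μ.real {ω | X ω = 1} * (s * c + 3 / 4 * (s * c) ^ 2)) := by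
  rw [mgf_mul_const_of_zero_or_one hX hval]
  calc 1 + μ.real {ω | X ω = 1} * (Real.exp (s * c) - 1)
      ≤ Real.exp (μ.real {ω | X ω = 1} * (Real.exp (s * c) - 1)) := by
        linarith [Real.add_one_le_exp (μ.real {ω | X ω = 1} * (Real.exp (s * c) - 1))]
    _ ≤ Real.exp (μ.real {ω | X ω = 1} * (s * c + 3 / 4 * (s * c) ^ 2)) := by
        gcongr
        linarith [Real.exp_le_one_add_add_three_quarters_mul_sq hsc]

lemma mgf_sum_mul_le_of_zero_or_one [IsProbabilityMeasure μ] {ι : Type*} [Fintype ι]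
    {X : ι → Ω → ℝ} (hind : iIndepFun X μ) (hX : ∀ j, Measurable (X j))
    (hval : ∀ j ω, X j ω = 0 ∨ X j ω = 1) {c : ι → ℝ} {s : ℝ} (hsc : ∀ j, |s * c j| ≤ 1) :
    mgf (fun ω => ∑ j, X j ω * c j) μ s ≤
      Real.exp (∑ j, μ.real {ω | X j ω = 1} * (s * c j + 3 / 4 * (s * c j) ^ 2)) := by
  have hind' : iIndepFun (fun j ω => X j ω * c j) μ :=
    hind.comp (fun j x => x * c j) fun j => measurable_mul_const _
  have hsum : (fun ω => ∑ j, X j ω * c j) = ∑ j, fun ω => X j ω * c j := by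
    funext ω; simp
  rw [hsum, hind'.mgf_sum (fun j => (hX j).mul_const _), Real.exp_sum]
  exact Finset.prod_le_prod (fun j _ => mgf_nonneg)
    fun j _ => mgf_mul_const_le_of_zero_or_one (hX j) (hval j) (hsc j)

theorem measureReal_lt_abs_sum_mul_sub_le [IsProbabilityMeasure μ] {ι : Type*} [Fintype ι]
    {X : ι → Ω → ℝ} (hind : iIndepFun X μ) (hX : ∀ j, Measurable (X j))
    (hval : ∀ j ω, X j ω = 0 ∨ X j ω = 1) {c : ι → ℝ} {t : ℝ} (ht : 0 ≤ t)
    (htc : ∀ j, |t * c j| ≤ 1) (δ : ℝ) :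
    μ.real {ω | δ < |∑ j, X j ω * c j - ∑ j, μ.real {ω | X j ω = 1} * c j|} ≤
      2 * Real.exp (-t * δ + 3 / 4 * t ^ 2 * ∑ j, μ.real {ω | X j ω = 1} * c j ^ 2) := by
  have hind' : iIndepFun (fun j ω => X j ω * c j) μ :=
    hind.comp (fun j x => x * c j) fun j => measurable_mul_const _
  have hint : ∀ s, Integrable (fun ω => Real.exp (s * ∑ j, X j ω * c j)) μ := fun s => by
    simpa using hind'.integrable_exp_mul_sum (s := Finset.univ) (fun j => (hX j).mul_const _)
      fun j _ => integrable_exp_mul_mul_of_zero_or_one (hX j) (hval j) (c j) s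
  have hmgf : ∀ s, |s| = t → mgf (fun ω => ∑ j, X j ω * c j) μ s ≤ Real.exp
      (s * ∑ j, μ.real {ω | X j ω = 1} * c j +
        3 / 4 * t ^ 2 * ∑ j, μ.real {ω | X j ω = 1} * c j ^ 2) := fun s hs => by
    have hsc : ∀ j, |s * c j| ≤ 1 := fun j => by
      simpa only [abs_mul, hs, abs_of_nonneg ht] using htc j
    have hs2 : s ^ 2 = t ^ 2 := by rw [← sq_abs, hs]
    refine (mgf_sum_mul_le_of_zero_or_one hind hX hval hsc).trans_eq ?_
    rw [Finset.mul_sum, Finset.mul_sum, ← Finset.sum_add_distrib, ← hs2]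
    congr 1
    exact Finset.sum_congr rfl fun j _ => by ring
  exact measureReal_lt_abs_sub_le ht (hint t) (hint (-t)) (hmgf t (abs_of_nonneg ht))
    (hmgf (-t) (by rw [abs_neg, abs_of_nonneg ht])) δ

theorem measureReal_lt_abs_sum_mul_sub_one_le [IsProbabilityMeasure μ] {ι : Type*} [Fintype ι]
    {X : ι → Ω → ℝ} (hind : iIndepFun X μ) (hX : ∀ j, Measurable (X j))
    (hval : ∀ j ω, X j ω = 0 ∨ X j ω = 1) {c : ι → ℝ} {b : ℝ} (hb : 0 < b)
    (hc0 : ∀ j, 0 ≤ c j) (hcb : ∀ j, c j ≤ b) (hmean : ∑ j, μ.real {ω | X j ω = 1} * c j = 1)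
    {δ : ℝ} (hδ0 : 0 ≤ δ) (hδ3 : δ ≤ 3) :
    μ.real {ω | δ < |∑ j, X j ω * c j - 1|} ≤ 2 * Real.exp (-δ ^ 2 / (4 * b)) := by
  set t := δ / (3 * b)
  have ht : 0 ≤ t := by positivity
  have htb : t * b = δ / 3 := by simp only [t]; field_simp
  have htc : ∀ j, |t * c j| ≤ 1 := fun j => by
    rw [abs_of_nonneg (mul_nonneg ht (hc0 j))]
    calc t * c j ≤ t * b := mul_le_mul_of_nonneg_left (hcb j) ht
      _ = δ / 3 := htb
      _ ≤ 1 := by linarith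
  have hvar := sum_mul_sq_le_mul_sum_mul (p := fun j => μ.real {ω | X j ω = 1})
    (fun j => measureReal_nonneg) hc0 hcb
  rw [hmean, mul_one] at hvar
  have hexp : -t * δ + 3 / 4 * t ^ 2 * b = -δ ^ 2 / (4 * b) := by
    simp only [t]; field_simp; ring
  have hbound := measureReal_lt_abs_sum_mul_sub_le hind hX hval ht htc δ
  rw [hmean] at hbound
  refine hbound.trans ?_
  rw [← hexp]
  gcongr

end BernoulliChernoff

theorem stmt10 {n : ℕ} (hn : 1 ≤ n) (m : ℝ) (hm : 0 < m) (i : Fin n)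
    (qhat : Fin n → Fin n → ℝ) (hq : ∀ j, qhat i j ∈ Set.Ioc (0 : ℝ) 1)
    (ustar : Fin n → ℝ) (hu : ∑ j, (ustar j) ^ 2 = 1)
    (hub : ∀ j, (ustar j) ^ 2 ≤ (16 * n / m) * qhat i j)
    {Ω : Type*} [MeasureSpace Ω] [IsProbabilityMeasure (ℙ : Measure Ω)]
    (X : Fin n → Ω → ℝ)
    (hmeas : ∀ j, Measurable (X j))
    (hval : ∀ j ω, X j ω = 0 ∨ X j ω = 1)
    (hind : iIndepFun X ℙ)
    (hX : ∀ j, ℙ {ω | X j ω = 1} = ENNReal.ofReal (qhat i j))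
    (δ1 : ℝ) (hδ1 : δ1 ∈ Set.Ioc (0 : ℝ) 3) :
    ℙ {ω | δ1 < |(∑ j, X j ω * (ustar j) ^ 2 / qhat i j) - 1|} ≤
      ENNReal.ofReal (2 * Real.exp (-(δ1 ^ 2 * m) / (64 * n))) := by
  have hq0 : ∀ j, 0 < qhat i j := fun j => (hq j).1
  have hp : ∀ j, (ℙ : Measure Ω).real {ω | X j ω = 1} = qhat i j := fun j => by
    rw [measureReal_def, hX j, ENNReal.toReal_ofReal (hq0 j).le]
  have hn0 : (0 : ℝ) < n := by exact_mod_cast hn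
  have hmean : ∑ j, (ℙ : Measure Ω).real {ω | X j ω = 1} * (ustar j ^ 2 / qhat i j) = 1 := by
    simp only [hp, mul_div_cancel₀ _ (hq0 _).ne', hu]
  have hbound := measureReal_lt_abs_sum_mul_sub_one_le hind hmeas hval (by positivity)
    (fun j => div_nonneg (sq_nonneg _) (hq0 j).le) (fun j => (div_le_iff₀ (hq0 j)).2 (hub j))
    hmean hδ1.1.le hδ1.2
  have hexp : -δ1 ^ 2 / (4 * (16 * n / m)) = -(δ1 ^ 2 * m) / (64 * n) := by
    field_simp; ring
  rw [hexp] at hbound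
  simp only [← mul_div_assoc] at hbound
  rw [← ofReal_measureReal]
  exact ENNReal.ofReal_le_ofReal hbound
end

section
/- Let n ≥ 1, m > 0, c_1 ≥ 1, and let q̂_{ij} ∈ (0,1] for all i, j ∈ [n]. Let u, u*, v* ∈ ℝ^n be unit vectors satisfying, for all i, j: (u_i)² ≤ (4n·c_1²/m)·q̂_{ij} and |u_i|·|v*_j| ≤ (16n·c_1/m)·q̂_{ij}. Let (δ_{ij})_{i,j∈[n]} be independent {0,1}-valued random variables with P(δ_{ij}=1) = q̂_{ij}. Define the diagonal matrices B and C by B_{jj} = ∑_i δ_{ij}·u_i²/q̂_{ij} and C_{jj} = ∑_i δ_{ij}·u_i·u*_i/q̂_{ij}. Then for every δ_1 ∈ (0, 3]: P( ‖(⟨u, u*⟩·B − C)·v*‖ > δ_1·√(1 − ⟨u, u*⟩²) ) ≤ 2n·exp(−δ_1²·m/(40n·c_1²)). -/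
/-!
Write `ρ = ⟨u, u*⟩` and `w = ρ u - u*`, so that `‖w‖² = 1 - ρ²` and `⟨u, w⟩ = 0`. The `j`-th
entry of `(ρ B - C) v*` is `Y_j = ∑ i, δ_ij b_ij` with `b_ij = u_i w_i v*_j / q̂_ij`; it is centred
because `⟨u, w⟩ = 0`, and the hypotheses give `|b_ij| ≤ (16 n c₁ / m) ‖w‖` and
`∑ q̂_ij b_ij² ≤ (4 n c₁² / m) ‖w‖²`.

Convexity of `t ↦ cosh √t` gives `cosh (λ ‖Y‖) ≤ ∏_j cosh (λ Y_j)`. Expanding the product over sign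
vectors `ε ∈ {±1}ⁿ` writes its expectation as an average of moment generating functions of
`∑_{ij} ε_j λ b_ij δ_ij`; by independence and `eˣ ≤ 1 + x + 2 x²` for `x ≤ 3`, each is at most
`exp (2 λ² ∑ q̂ b²)`, the linear terms cancelling column by column. Markov's inequality with
`λ = t / (4 V)`, `V ≥ ∑ q̂ b²`, then gives `P(‖Y‖ > t) ≤ 2 exp (-t² / (8 V))`.
-/

open MeasureTheory ProbabilityTheory

namespace Real

lemma exp_le_one_add_add_two_mul_sq {x : ℝ} (hx : x ≤ 3) : exp x ≤ 1 + x + 2 * x ^ 2 := by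
  rcases le_or_gt x 0 with hx0 | hx0
  · -- `(1 - x) * (1 + x + 2 x²) = 1 + x² (1 - 2 x) ≥ 1`
    have h : exp x * (1 - x) ≤ 1 := by
      calc exp x * (1 - x) ≤ exp x * exp (-x) := by
            gcongr; linarith [add_one_le_exp (-x)]
        _ = 1 := by rw [← exp_add, add_neg_cancel, exp_zero]
    nlinarith [exp_pos x, sq_nonneg x]
  · -- for `t = x / 3 ∈ [0, 1]`, cube the Taylor bound `exp t ≤ 1 + t + (13 / 18) t²`
    set t := x / 3
    have ht0 : 0 ≤ t := by positivity
    have ht1 : t ≤ 1 := by simp only [t]; linarith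
    have htaylor : exp t ≤ 1 + t + 13 / 18 * t ^ 2 := by
      have h := exp_bound' ht0 ht1 (n := 3) (by norm_num)
      norm_num [Finset.sum_range_succ, Nat.factorial] at h
      nlinarith [pow_le_pow_of_le_one ht0 ht1 (show 2 ≤ 3 by norm_num)]
    have hcube : (1 + t + 13 / 18 * t ^ 2) ^ 3 ≤ 1 + 3 * t + 18 * t ^ 2 := by
      have h := fun k (hk : 2 ≤ k) => pow_le_pow_of_le_one ht0 ht1 hk
      nlinarith [h 3 (by norm_num), h 4 (by norm_num), h 5 (by norm_num), h 6 (by norm_num)]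
    calc exp x = exp t ^ 3 := by rw [← exp_nat_mul]; congr 1; simp only [t]; ring
      _ ≤ (1 + t + 13 / 18 * t ^ 2) ^ 3 := by gcongr
      _ ≤ 1 + x + 2 * x ^ 2 := by simp only [t] at hcube ⊢; linarith

lemma convexOn_sinh : ConvexOn ℝ (Set.Ici 0) sinh := by
  refine convexOn_of_deriv2_nonneg (convex_Ici 0) continuous_sinh.continuousOn
    differentiable_sinh.differentiableOn ?_ fun x hx => ?_
  · rw [deriv_sinh]; exact differentiable_cosh.differentiableOn
  · rw [interior_Ici] at hx
    simpa [Function.iterate_succ, deriv_sinh, deriv_cosh] using sinh_nonneg_iff.2 (le_of_lt hx)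

lemma monotoneOn_sinh_div : MonotoneOn (fun x => sinh x / x) (Set.Ioi 0) := by
  intro x hx y hy hxy
  simpa using convexOn_sinh.secant_mono (a := 0) Set.self_mem_Ici (Set.Ioi_subset_Ici_self hx)
    (Set.Ioi_subset_Ici_self hy) (ne_of_gt hx) (ne_of_gt hy) hxy

lemma convexOn_cosh_sqrt : ConvexOn ℝ (Set.Ici 0) (fun t => cosh √t) := by
  have hderiv : ∀ t : ℝ, 0 < t → HasDerivAt (fun t => cosh √t) (sinh √t / √t / 2) t := by
    intro t ht
    convert (hasDerivAt_sqrt ht.ne').cosh using 1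
    field_simp
  refine MonotoneOn.convexOn_of_deriv (convex_Ici 0)
    (continuous_cosh.comp continuous_sqrt).continuousOn ?_ ?_
  · rw [interior_Ici]
    exact fun t ht => (hderiv t ht).differentiableAt.differentiableWithinAt
  · rw [interior_Ici]
    intro s hs t ht hst
    rw [(hderiv s hs).deriv, (hderiv t ht).deriv]
    gcongr ?_ / 2
    exact monotoneOn_sinh_div (sqrt_pos.2 hs) (sqrt_pos.2 ht) (sqrt_le_sqrt hst)

lemma cosh_sqrt_sq_add_sq_le (x y : ℝ) : cosh √(x ^ 2 + y ^ 2) ≤ cosh x * cosh y := by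
  -- Jensen at the midpoint of `(x + y)²` and `(x - y)²`
  have h := convexOn_cosh_sqrt.2 (Set.mem_Ici.2 (sq_nonneg (x + y)))
    (Set.mem_Ici.2 (sq_nonneg (x - y))) (by norm_num : (0 : ℝ) ≤ 1 / 2)
    (by norm_num : (0 : ℝ) ≤ 1 / 2) (by norm_num)
  simp only [smul_eq_mul, sqrt_sq_eq_abs, cosh_abs, cosh_add, cosh_sub] at h
  calc cosh √(x ^ 2 + y ^ 2) = cosh √(1 / 2 * (x + y) ^ 2 + 1 / 2 * (x - y) ^ 2) := by ring_nf
    _ ≤ _ := h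
    _ = cosh x * cosh y := by ring

lemma cosh_sqrt_sum_sq_le_prod_cosh {ι : Type*} (s : Finset ι) (f : ι → ℝ) :
    cosh √(∑ j ∈ s, f j ^ 2) ≤ ∏ j ∈ s, cosh (f j) := by
  induction s using Finset.cons_induction with
  | empty => simp
  | cons a s ha ih =>
    have hsum : 0 ≤ ∑ j ∈ s, f j ^ 2 := Finset.sum_nonneg fun j _ => sq_nonneg _
    rw [Finset.sum_cons, Finset.prod_cons]
    calc cosh √(f a ^ 2 + ∑ j ∈ s, f j ^ 2) ≤ cosh (f a) * cosh √(∑ j ∈ s, f j ^ 2) := by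
          have h := cosh_sqrt_sq_add_sq_le (f a) √(∑ j ∈ s, f j ^ 2)
          rwa [sq_sqrt hsum] at h
      _ ≤ cosh (f a) * ∏ j ∈ s, cosh (f j) := by gcongr

lemma prod_cosh_eq_sum_exp {κ : Type*} [Fintype κ] [DecidableEq κ] (a : κ → ℝ) :
    ∏ j, cosh (a j) =
      (∑ ε : κ → Bool, exp (∑ j, (bif ε j then 1 else -1) * a j)) / 2 ^ Fintype.card κ := by
  have hcosh : ∀ x, cosh x = (∑ b : Bool, exp ((bif b then 1 else -1) * x)) / 2 := by
    intro x; simp [cosh_eq]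
  simp_rw [hcosh, Finset.prod_div_distrib, Fintype.prod_sum, ← exp_sum]
  simp

end Real

open Real

section Bernoulli

variable {Ω : Type*} [MeasurableSpace Ω] {μ : Measure Ω}

lemma integral_eq_measureReal_of_bernoulli {X : Ω → ℝ} (hX : Measurable X)
    (hval : ∀ ω, X ω = 0 ∨ X ω = 1) : ∫ ω, X ω ∂μ = μ.real {ω | X ω = 1} := by
  have hX1 : X = {ω | X ω = 1}.indicator 1 := by
    funext ω
    rcases hval ω with h | h <;> simp [Set.indicator, h]
  conv_lhs => rw [hX1]
  exact integral_indicator_one (hX (measurableSet_singleton 1))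

variable [IsProbabilityMeasure μ]

lemma mgf_eq_of_bernoulli {X : Ω → ℝ} (hX : Measurable X) (hval : ∀ ω, X ω = 0 ∨ X ω = 1)
    (c : ℝ) : mgf X μ c = 1 + (exp c - 1) * μ.real {ω | X ω = 1} := by
  have hlin : (fun ω => exp (c * X ω)) = fun ω => 1 + (exp c - 1) * X ω := by
    funext ω
    rcases hval ω with h | h <;> simp [h]
  have hint : Integrable X μ := Integrable.of_bound hX.aestronglyMeasurable 1
    (ae_of_all _ fun ω => by rcases hval ω with h | h <;> simp [h])
  rw [mgf, hlin, integral_add (integrable_const 1) (hint.const_mul _), integral_const_mul,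
    integral_eq_measureReal_of_bernoulli hX hval]
  simp

lemma mgf_le_of_bernoulli {X : Ω → ℝ} (hX : Measurable X) (hval : ∀ ω, X ω = 0 ∨ X ω = 1)
    {c : ℝ} (hc : c ≤ 3) : mgf X μ c ≤ exp (μ.real {ω | X ω = 1} * (c + 2 * c ^ 2)) := by
  rw [mgf_eq_of_bernoulli hX hval]
  have hp : 0 ≤ μ.real {ω | X ω = 1} := measureReal_nonneg
  calc 1 + (exp c - 1) * μ.real {ω | X ω = 1}
      ≤ μ.real {ω | X ω = 1} * (c + 2 * c ^ 2) + 1 := by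
        nlinarith [exp_le_one_add_add_two_mul_sq hc]
    _ ≤ exp (μ.real {ω | X ω = 1} * (c + 2 * c ^ 2)) := add_one_le_exp _

variable {ι : Type*} [Fintype ι] {X : ι → Ω → ℝ}

lemma integrable_exp_sum_mul_of_bernoulli (hX : ∀ i, Measurable (X i))
    (hval : ∀ i ω, X i ω = 0 ∨ X i ω = 1) (c : ι → ℝ) :
    Integrable (fun ω => exp (∑ i, c i * X i ω)) μ := by
  refine Integrable.of_bound (by fun_prop) (exp (∑ i, |c i|)) (ae_of_all _ fun ω => ?_)
  rw [norm_of_nonneg (exp_pos _).le, exp_le_exp]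
  refine Finset.sum_le_sum fun i _ => ?_
  rcases hval i ω with h | h <;> simp [h, le_abs_self]

lemma integral_exp_sum_mul_le_of_bernoulli (hX : ∀ i, Measurable (X i))
    (hval : ∀ i ω, X i ω = 0 ∨ X i ω = 1) (hind : iIndepFun X μ) {c : ι → ℝ}
    (hc : ∀ i, c i ≤ 3) :
    ∫ ω, exp (∑ i, c i * X i ω) ∂μ ≤ exp (∑ i, μ.real {ω | X i ω = 1} * (c i + 2 * c i ^ 2)) := by
  have hmgf : ∫ ω, exp (∑ i, c i * X i ω) ∂μ = ∏ i, mgf (X i) μ (c i) := by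
    have h := (hind.comp (fun i x => c i * x) fun i => measurable_const_mul (c i)).mgf_sum
      (fun i => (hX i).const_mul (c i)) (t := 1) Finset.univ
    simp only [mgf, Function.comp_def, Finset.sum_apply, one_mul] at h
    simpa only [mgf] using h
  rw [hmgf, exp_sum]
  exact Finset.prod_le_prod (fun i _ => mgf_nonneg) fun i _ =>
    mgf_le_of_bernoulli (hX i) (hval i) (hc i)

end Bernoulli

lemma prod_cosh_sum_mul_eq_sum_exp {ι κ : Type*} [Fintype ι] [Fintype κ] [DecidableEq κ]
    (b x : ι × κ → ℝ) :
    ∏ j, cosh (∑ i, b (i, j) * x (i, j)) =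
      (∑ ε : κ → Bool, exp (∑ p, ((bif ε p.2 then 1 else -1) * b p) * x p)) /
        2 ^ Fintype.card κ := by
  simp_rw [prod_cosh_eq_sum_exp (fun j => ∑ i, b (i, j) * x (i, j)), Fintype.sum_prod_type_right,
    Finset.mul_sum, mul_assoc]

lemma measure_lt_sqrt_sum_sq_le_integral_prod_cosh {Ω κ : Type*} [MeasurableSpace Ω]
    {μ : Measure Ω} [IsFiniteMeasure μ] [Fintype κ] {Y : κ → Ω → ℝ}
    {l t : ℝ} (hl : 0 ≤ l) (ht : 0 ≤ t) (hint : Integrable (fun ω => ∏ j, cosh (l * Y j ω)) μ) :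
    μ {ω | t < √(∑ j, Y j ω ^ 2)} ≤
      ENNReal.ofReal ((∫ ω, ∏ j, cosh (l * Y j ω) ∂μ) / cosh (l * t)) := by
  have hsub : {ω | t < √(∑ j, Y j ω ^ 2)} ⊆ {ω | cosh (l * t) ≤ ∏ j, cosh (l * Y j ω)} := by
    intro ω hω
    have hscale : l * √(∑ j, Y j ω ^ 2) = √(∑ j, (l * Y j ω) ^ 2) := by
      simp_rw [mul_pow, ← Finset.mul_sum, sqrt_mul (sq_nonneg l), sqrt_sq hl]
    calc cosh (l * t) ≤ cosh (l * √(∑ j, Y j ω ^ 2)) := by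
          rw [cosh_le_cosh, abs_of_nonneg (by positivity), abs_of_nonneg (by positivity)]
          exact mul_le_mul_of_nonneg_left hω.le hl
      _ ≤ ∏ j, cosh (l * Y j ω) := hscale ▸ cosh_sqrt_sum_sq_le_prod_cosh _ _
  calc μ {ω | t < √(∑ j, Y j ω ^ 2)} ≤ μ {ω | cosh (l * t) ≤ ∏ j, cosh (l * Y j ω)} :=
        measure_mono hsub
    _ = ENNReal.ofReal (μ.real {ω | cosh (l * t) ≤ ∏ j, cosh (l * Y j ω)}) :=
        (ofReal_measureReal (measure_ne_top _ _)).symm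
    _ ≤ _ := by
        refine ENNReal.ofReal_le_ofReal ((le_div_iff₀' (cosh_pos _)).2 ?_)
        exact mul_meas_ge_le_integral_of_nonneg
          (ae_of_all _ fun ω => Finset.prod_nonneg fun j _ => (cosh_pos _).le) hint _

lemma abs_mul_div_mul_le {a w q v C s : ℝ} (hq : 0 < q) (h : |a| * |v| ≤ C * q)
    (hw : |w| ≤ s) : |a * w / q * v| ≤ C * s := by
  rw [abs_mul, abs_div, abs_mul, abs_of_pos hq, div_mul_eq_mul_div, div_le_iff₀ hq]
  calc |a| * |w| * |v| = |a| * |v| * |w| := by ring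
    _ ≤ C * q * s := mul_le_mul h hw (abs_nonneg _) ((by positivity : (0 : ℝ) ≤ _).trans h)
    _ = C * s * q := by ring

lemma sum_mul_sq_mul_div_mul_le {ι κ : Type*} [Fintype ι] [Fintype κ] {q : ι → κ → ℝ}
    {a w : ι → ℝ} {v : κ → ℝ} {C : ℝ} (hq : ∀ i j, 0 < q i j) (ha : ∀ i j, a i ^ 2 ≤ C * q i j) :
    ∑ p : ι × κ, q p.1 p.2 * (a p.1 * w p.1 / q p.1 p.2 * v p.2) ^ 2 ≤
      C * ((∑ i, w i ^ 2) * ∑ j, v j ^ 2) := by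
  simp only [Fintype.sum_prod_type]
  rw [Fintype.sum_mul_sum, Finset.mul_sum]
  refine Finset.sum_le_sum fun i _ => ?_
  rw [Finset.mul_sum]
  refine Finset.sum_le_sum fun j _ => ?_
  calc q i j * (a i * w i / q i j * v j) ^ 2 = a i ^ 2 / q i j * (w i ^ 2 * v j ^ 2) := by
        field_simp [(hq i j).ne']
    _ ≤ C * (w i ^ 2 * v j ^ 2) := by gcongr; rw [div_le_iff₀ (hq i j)]; exact ha i j

section SumOfBernoulli

variable {Ω ι κ : Type*} [MeasurableSpace Ω] {μ : Measure Ω} [IsProbabilityMeasure μ]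
  [Fintype ι] [Fintype κ] [DecidableEq κ] {X : ι × κ → Ω → ℝ}

lemma integrable_prod_cosh_sum_mul_of_bernoulli (hX : ∀ p, Measurable (X p))
    (hval : ∀ p ω, X p ω = 0 ∨ X p ω = 1) (b : ι × κ → ℝ) :
    Integrable (fun ω => ∏ j, cosh (∑ i, b (i, j) * X (i, j) ω)) μ := by
  simp_rw [fun ω => prod_cosh_sum_mul_eq_sum_exp b (X · ω)]
  exact (integrable_finsetSum _ fun ε _ =>
    integrable_exp_sum_mul_of_bernoulli hX hval _).div_const _

lemma integral_prod_cosh_sum_mul_le_of_bernoulli (hX : ∀ p, Measurable (X p))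
    (hval : ∀ p ω, X p ω = 0 ∨ X p ω = 1) (hind : iIndepFun X μ) {b : ι × κ → ℝ}
    (hb : ∀ p, |b p| ≤ 3) (hmean : ∀ j, ∑ i, μ.real {ω | X (i, j) ω = 1} * b (i, j) = 0) :
    ∫ ω, ∏ j, cosh (∑ i, b (i, j) * X (i, j) ω) ∂μ ≤
      exp (2 * ∑ p, μ.real {ω | X p ω = 1} * b p ^ 2) := by
  simp_rw [fun ω => prod_cosh_sum_mul_eq_sum_exp b (X · ω), integral_div]
  rw [integral_finsetSum _ fun ε _ => integrable_exp_sum_mul_of_bernoulli hX hval _,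
    div_le_iff₀ (by positivity)]
  -- the linear terms cancel column by column, so every choice of signs gives the same bound
  have hsigned : ∀ ε : κ → Bool,
      ∫ ω, exp (∑ p, ((bif ε p.2 then 1 else -1) * b p) * X p ω) ∂μ ≤
        exp (2 * ∑ p, μ.real {ω | X p ω = 1} * b p ^ 2) := by
    intro ε
    refine (integral_exp_sum_mul_le_of_bernoulli hX hval hind fun p => ?_).trans_eq ?_
    · refine (le_abs_self _).trans ?_
      cases ε p.2 <;> simpa using hb p
    · have hsq : ∀ p, ((bif ε p.2 then 1 else -1) * b p) ^ 2 = b p ^ 2 := by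
        intro p; cases ε p.2 <;> simp
      have hlin : ∑ p, μ.real {ω | X p ω = 1} * ((bif ε p.2 then 1 else -1) * b p) = 0 := by
        rw [Fintype.sum_prod_type_right]
        refine Finset.sum_eq_zero fun j _ => ?_
        simp_rw [mul_left_comm _ (_root_.cond _ _ _)]
        rw [← Finset.mul_sum, hmean, mul_zero]
      simp_rw [mul_add, Finset.sum_add_distrib, hlin, hsq, Finset.mul_sum]
      ring_nf
  calc ∑ ε : κ → Bool, ∫ ω, exp (∑ p, ((bif ε p.2 then 1 else -1) * b p) * X p ω) ∂μ
      ≤ ∑ _ε : κ → Bool, exp (2 * ∑ p, μ.real {ω | X p ω = 1} * b p ^ 2) :=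
        Finset.sum_le_sum fun ε _ => hsigned ε
    _ = _ := by simp [mul_comm]

theorem measure_lt_sqrt_sum_sq_sum_mul_le_of_bernoulli (hX : ∀ p, Measurable (X p))
    (hval : ∀ p ω, X p ω = 0 ∨ X p ω = 1) (hind : iIndepFun X μ) {b : ι × κ → ℝ}
    (hmean : ∀ j, ∑ i, μ.real {ω | X (i, j) ω = 1} * b (i, j) = 0) {β V t : ℝ}
    (hβ : ∀ p, |b p| ≤ β) (hV : ∑ p, μ.real {ω | X p ω = 1} * b p ^ 2 ≤ V) (hV0 : 0 < V)
    (ht : 0 ≤ t) (htβ : t * β ≤ 12 * V) :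
    μ {ω | t < √(∑ j, (∑ i, b (i, j) * X (i, j) ω) ^ 2)} ≤
      ENNReal.ofReal (2 * exp (-t ^ 2 / (8 * V))) := by
  set l := t / (4 * V) with hl
  have hl0 : 0 ≤ l := by positivity
  have hlb : ∀ j ω, l * ∑ i, b (i, j) * X (i, j) ω = ∑ i, (l * b (i, j)) * X (i, j) ω := by
    intro j ω; rw [Finset.mul_sum]; simp_rw [mul_assoc]
  have hint := integrable_prod_cosh_sum_mul_of_bernoulli (μ := μ) hX hval (fun p => l * b p)
  simp_rw [← hlb] at hint
  refine (measure_lt_sqrt_sum_sq_le_integral_prod_cosh hl0 ht hint).trans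
    (ENNReal.ofReal_le_ofReal ?_)
  have hmoment : ∫ ω, ∏ j, cosh (l * ∑ i, b (i, j) * X (i, j) ω) ∂μ ≤ exp (2 * l ^ 2 * V) := by
    simp_rw [hlb]
    refine (integral_prod_cosh_sum_mul_le_of_bernoulli (b := fun p => l * b p) hX hval hind
      (fun p => ?_) fun j => ?_).trans ?_
    · rw [abs_mul, abs_of_nonneg hl0]
      calc l * |b p| ≤ l * β := by gcongr; exact hβ p
        _ ≤ 3 := by rw [hl, div_mul_eq_mul_div, div_le_iff₀ (by positivity)]; linarith
    · simp_rw [mul_left_comm _ l, ← Finset.mul_sum, hmean, mul_zero]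
    · simp_rw [exp_le_exp, mul_pow, mul_left_comm _ (l ^ 2), ← Finset.mul_sum, mul_assoc]
      gcongr
  have hcosh : exp (l * t) / 2 ≤ cosh (l * t) := by
    rw [cosh_eq]; linarith [exp_pos (-(l * t))]
  calc (∫ ω, ∏ j, cosh (l * ∑ i, b (i, j) * X (i, j) ω) ∂μ) / cosh (l * t)
      ≤ exp (2 * l ^ 2 * V) / (exp (l * t) / 2) := by
        gcongr
    _ = 2 * exp (-t ^ 2 / (8 * V)) := by
        rw [div_div_eq_mul_div, mul_comm, mul_div_assoc, ← exp_sub, hl]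
        congr 2
        field_simp
        ring

theorem measure_lt_sqrt_sum_sq_sum_mul_div_le_of_bernoulli (hX : ∀ p, Measurable (X p))
    (hval : ∀ p ω, X p ω = 0 ∨ X p ω = 1) (hind : iIndepFun X μ) {q : ι → κ → ℝ}
    (hq : ∀ i j, 0 < q i j) (hXq : ∀ p, μ.real {ω | X p ω = 1} = q p.1 p.2) {a w : ι → ℝ}
    {v : κ → ℝ} (haw : ∑ i, a i * w i = 0) (hv : ∑ j, v j ^ 2 = 1) {A B δ : ℝ} (hA0 : 0 < A)
    (hA : ∀ i j, a i ^ 2 ≤ A * q i j) (hB : ∀ i j, |a i| * |v j| ≤ B * q i j) (hδ : 0 ≤ δ)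
    (hδB : δ * B ≤ 12 * A) :
    μ {ω | δ * √(∑ i, w i ^ 2) < √(∑ j, (∑ i, a i * w i / q i j * v j * X (i, j) ω) ^ 2)} ≤
      ENNReal.ofReal (2 * exp (-δ ^ 2 / (8 * A))) := by
  set s := √(∑ i, w i ^ 2)
  set b : ι × κ → ℝ := fun p => a p.1 * w p.1 / q p.1 p.2 * v p.2
  have hβ : ∀ p, |b p| ≤ B * s := fun p => abs_mul_div_mul_le (hq _ _) (hB _ _)
    (abs_le_sqrt (Finset.single_le_sum (fun i _ => sq_nonneg (w i)) (Finset.mem_univ _)))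
  obtain hs0 | hs := (show 0 ≤ s from sqrt_nonneg _).eq_or_lt
  · have hb0 : ∀ i j, a i * w i / q i j * v j = 0 := fun i j =>
      abs_nonpos_iff.1 ((hβ (i, j)).trans_eq (by rw [← hs0, mul_zero]))
    simp [hb0, ← hs0]
  have hmean : ∀ j, ∑ i, μ.real {ω | X (i, j) ω = 1} * b (i, j) = 0 := by
    intro j
    have hqb : ∀ i, q i j * b (i, j) = a i * w i * v j := fun i => by
      simp only [b]; field_simp [(hq i j).ne']
    simp_rw [fun i => hXq (i, j), hqb, ← Finset.sum_mul, haw, zero_mul]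
  have hvar : ∑ p, μ.real {ω | X p ω = 1} * b p ^ 2 ≤ A * s ^ 2 := by
    simp_rw [hXq]
    refine (sum_mul_sq_mul_div_mul_le hq hA).trans_eq ?_
    rw [hv, mul_one, sq_sqrt (Finset.sum_nonneg fun i _ => sq_nonneg _)]
  refine (measure_lt_sqrt_sum_sq_sum_mul_le_of_bernoulli hX hval hind hmean hβ hvar
    (by positivity) (by positivity) ?_).trans_eq ?_
  · calc δ * s * (B * s) = δ * B * s ^ 2 := by ring
      _ ≤ 12 * (A * s ^ 2) := by rw [← mul_assoc]; gcongr
  · congr 3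
    field_simp

end SumOfBernoulli

section Projection

variable {ι : Type*} [Fintype ι] {u ustar : ι → ℝ}

lemma sum_sq_inner_mul_sub (hu : ∑ i, u i ^ 2 = 1) (hustar : ∑ i, ustar i ^ 2 = 1) :
    ∑ i, ((∑ k, u k * ustar k) * u i - ustar i) ^ 2 = 1 - (∑ k, u k * ustar k) ^ 2 := by
  simp_rw [sub_sq, mul_pow, Finset.sum_add_distrib, Finset.sum_sub_distrib, mul_assoc,
    ← Finset.mul_sum, hu, hustar]
  ring

lemma sum_mul_inner_mul_sub (hu : ∑ i, u i ^ 2 = 1) :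
    ∑ i, u i * ((∑ k, u k * ustar k) * u i - ustar i) = 0 := by
  simp_rw [mul_sub, mul_left_comm (u _), ← sq, Finset.sum_sub_distrib, ← Finset.mul_sum, hu]
  ring

end Projection

theorem stmt11 {n : ℕ} (hn : 1 ≤ n) (m c1 : ℝ) (hm : 0 < m) (hc1 : 1 ≤ c1)
    (qhat : Fin n → Fin n → ℝ) (hq : ∀ i j, qhat i j ∈ Set.Ioc (0 : ℝ) 1)
    (u ustar vstar : Fin n → ℝ)
    (hu : ∑ i, (u i) ^ 2 = 1) (hustar : ∑ i, (ustar i) ^ 2 = 1)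
    (hvstar : ∑ i, (vstar i) ^ 2 = 1)
    (hub : ∀ i j, (u i) ^ 2 ≤ (4 * n * c1 ^ 2 / m) * qhat i j)
    (huv : ∀ i j, |u i| * |vstar j| ≤ (16 * n * c1 / m) * qhat i j)
    {Ω : Type*} [MeasureSpace Ω] [IsProbabilityMeasure (ℙ : Measure Ω)]
    (X : Fin n × Fin n → Ω → ℝ)
    (hmeas : ∀ p, Measurable (X p))
    (hval : ∀ p ω, X p ω = 0 ∨ X p ω = 1)
    (hind : iIndepFun X ℙ)
    (hX : ∀ p, ℙ {ω | X p ω = 1} = ENNReal.ofReal (qhat p.1 p.2))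
    (δ1 : ℝ) (hδ1 : δ1 ∈ Set.Ioc (0 : ℝ) 3) :
    ℙ {ω | δ1 * Real.sqrt (1 - (∑ i, u i * ustar i) ^ 2) <
        Real.sqrt (∑ j, (((∑ i, u i * ustar i) * (∑ i, X (i, j) ω * (u i) ^ 2 / qhat i j)
          - ∑ i, X (i, j) ω * (u i * ustar i) / qhat i j) * vstar j) ^ 2)} ≤
      ENNReal.ofReal (2 * n * Real.exp (-(δ1 ^ 2 * m) / (40 * n * c1 ^ 2))) := by
  obtain ⟨hδ0, hδ3⟩ := hδ1
  have hp : ∀ p, (ℙ : Measure Ω).real {ω | X p ω = 1} = qhat p.1 p.2 := fun p => by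
    rw [measureReal_def, hX, ENNReal.toReal_ofReal (hq _ _).1.le]
  rw [← sum_sq_inner_mul_sub hu hustar]
  set ρ := ∑ i, u i * ustar i
  have hentry : ∀ ω j, (ρ * ∑ i, X (i, j) ω * u i ^ 2 / qhat i j
      - ∑ i, X (i, j) ω * (u i * ustar i) / qhat i j) * vstar j =
        ∑ i, u i * (ρ * u i - ustar i) / qhat i j * vstar j * X (i, j) ω := by
    intro ω j
    simp_rw [Finset.mul_sum, ← Finset.sum_sub_distrib, Finset.sum_mul]
    exact Finset.sum_congr rfl fun i _ => by ring
  simp_rw [hentry]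
  refine (measure_lt_sqrt_sum_sq_sum_mul_div_le_of_bernoulli hmeas hval hind
    (fun i j => (hq i j).1) hp (sum_mul_inner_mul_sub hu) hvstar (by positivity) hub huv hδ0.le
    ?_).trans (ENNReal.ofReal_le_ofReal ?_)
  · calc δ1 * (16 * n * c1 / m) ≤ 3 * c1 * (16 * n * c1 / m) := by gcongr; linarith
      _ = 12 * (4 * n * c1 ^ 2 / m) := by ring
  · have hn1 : (1 : ℝ) ≤ n := by exact_mod_cast hn
    calc 2 * exp (-δ1 ^ 2 / (8 * (4 * n * c1 ^ 2 / m)))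
        = 2 * exp (-(δ1 ^ 2 * m) / (32 * n * c1 ^ 2)) := by congr 2; field_simp; ring
      _ ≤ 2 * n * exp (-(δ1 ^ 2 * m) / (40 * n * c1 ^ 2)) := by
        gcongr ?_ * exp ?_
        · linarith
        · rw [neg_div, neg_div, neg_le_neg_iff]
          gcongr
          norm_num
end

section
/- Let σ* > 0, let u*, v*, u ∈ ℝ^n be unit vectors, write λ = ⟨u, u*⟩ and d = √(1 − λ²), and let δ_1 ∈ (0, 1/20]. Let B ∈ ℝ^{n×n} satisfy ‖B − I‖ ≤ δ_1 (so B is invertible), let E ∈ ℝ^n satisfy ‖E‖ ≤ δ_1·d, and let y ∈ ℝ^n and e ≥ 0 satisfy ‖y‖ ≤ σ*·e. Assume λ − 2δ_1·d − 2e ≥ 1/2. Define v̂ = σ*·λ·v* − σ*·B^{-1}E + B^{-1}y. Then v̂ ≠ 0 and √(1 − ⟨v̂/‖v̂‖, v*⟩²) ≤ 5·(δ_1·d + e). -/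
open Matrix

/-!
Write `v̂ = σ* λ v* + r` with `r = B⁻¹ (y - σ* E)`. Since `‖B - I‖ ≤ δ₁ ≤ 1/2`, the inverse
at most doubles norms, so `‖r‖ ≤ 2 σ* t` with `t = δ₁ d + e`. The gap hypothesis gives
`σ* λ - ‖r‖ ≥ σ*/2`, hence `‖v̂‖ ≥ σ*/2`. Finally the sine of the angle between `v̂` and the unit
vector `v*` is the distance from `v̂` to the line `ℝ v*` over `‖v̂‖`, which is at most
`‖r‖ / ‖v̂‖ ≤ 4 t`.
-/

open WithLp RealInnerProductSpace

lemma ContinuousLinearMap.one_sub_mul_norm_le_norm_apply {𝕜 E : Type*}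
    [NontriviallyNormedField 𝕜] [SeminormedAddCommGroup E] [NormedSpace 𝕜 E]
    {f : E →L[𝕜] E} {δ : ℝ} (hf : ‖f - 1‖ ≤ δ) (x : E) : (1 - δ) * ‖x‖ ≤ ‖f x‖ := by
  have hx : x = f x - (f - 1) x := by simp
  have hδx : ‖(f - 1) x‖ ≤ δ * ‖x‖ :=
    ((f - 1).le_opNorm x).trans (mul_le_mul_of_nonneg_right hf (norm_nonneg x))
  have := norm_sub_le (f x) ((f - 1) x)
  rw [← hx] at this
  linarith

lemma norm_toLp_eq_sqrt_sum_sq {ι : Type*} [Fintype ι] (x : ι → ℝ) :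
    ‖toLp 2 x‖ = Real.sqrt (∑ i, x i ^ 2) := by
  simp [EuclideanSpace.norm_eq]

lemma inner_toLp_eq_sum_mul {ι : Type*} [Fintype ι] (x y : ι → ℝ) :
    ⟪toLp 2 x, toLp 2 y⟫ = ∑ i, x i * y i := by
  simp [EuclideanSpace.inner_toLp_toLp, dotProduct, mul_comm]

namespace Matrix

variable {n : ℕ} {B : Matrix (Fin n) (Fin n) ℝ} {δ : ℝ}

lemma one_sub_mul_norm_le_norm_mulVec (hB : specNorm (B - 1) ≤ δ) (x : Fin n → ℝ) :
    (1 - δ) * ‖toLp 2 x‖ ≤ ‖toLp 2 (B *ᵥ x)‖ := by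
  have hB' : ‖toEuclideanCLM (n := Fin n) (𝕜 := ℝ) B - 1‖ ≤ δ := by
    rwa [← map_one (toEuclideanCLM (n := Fin n) (𝕜 := ℝ)), ← map_sub]
  exact ContinuousLinearMap.one_sub_mul_norm_le_norm_apply hB' (toLp 2 x)

lemma isUnit_of_specNorm_sub_one_lt_one (hB : specNorm (B - 1) < 1) : IsUnit B := by
  refine mulVec_injective_iff_isUnit.mp fun x y hxy => ?_
  have h := one_sub_mul_norm_le_norm_mulVec (B := B) le_rfl (x - y)
  rw [mulVec_sub, hxy, sub_self, toLp_zero, norm_zero] at h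
  have hxy0 : ‖toLp 2 (x - y)‖ = 0 :=
    le_antisymm (nonpos_of_mul_nonpos_right h (by linarith)) (norm_nonneg _)
  rw [norm_eq_zero, toLp_eq_zero] at hxy0
  exact sub_eq_zero.mp hxy0

lemma one_sub_mul_norm_inv_mulVec_le (hB : specNorm (B - 1) ≤ δ) (hδ : δ < 1)
    (w : Fin n → ℝ) : (1 - δ) * ‖toLp 2 (B⁻¹ *ᵥ w)‖ ≤ ‖toLp 2 w‖ := by
  have hdet : IsUnit B.det :=
    (isUnit_iff_isUnit_det B).mp (isUnit_of_specNorm_sub_one_lt_one (hB.trans_lt hδ))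
  simpa [mulVec_mulVec, mul_nonsing_inv B hdet] using
    one_sub_mul_norm_le_norm_mulVec hB (B⁻¹ *ᵥ w)

end Matrix

section Angle

variable {E : Type*} [NormedAddCommGroup E] [InnerProductSpace ℝ E] {v : E}

lemma norm_sq_sub_inner_sq_le_norm_sub_smul_sq (hv : ‖v‖ = 1) (V : E) (c : ℝ) :
    ‖V‖ ^ 2 - ⟪V, v⟫ ^ 2 ≤ ‖V - c • v‖ ^ 2 := by
  rw [norm_sub_sq_real, real_inner_smul_right, norm_smul, hv, Real.norm_eq_abs, mul_one, sq_abs]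
  nlinarith [sq_nonneg (c - ⟪V, v⟫)]

lemma sqrt_one_sub_sq_inner_div_norm_le (hv : ‖v‖ = 1) {V : E} (hV : V ≠ 0) (c : ℝ) :
    Real.sqrt (1 - (⟪V, v⟫ / ‖V‖) ^ 2) ≤ ‖V - c • v‖ / ‖V‖ := by
  have hV' : 0 < ‖V‖ := norm_pos_iff.mpr hV
  rw [← Real.sqrt_sq (div_nonneg (norm_nonneg (V - c • v)) hV'.le)]
  refine Real.sqrt_le_sqrt ?_
  rw [div_pow, div_pow, one_sub_div (by positivity)]
  exact div_le_div_of_nonneg_right (norm_sq_sub_inner_sq_le_norm_sub_smul_sq hv V c)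
    (by positivity)

lemma ne_zero_and_sqrt_one_sub_sq_inner_div_norm_le (hv : ‖v‖ = 1) {V : E} {c ε : ℝ}
    (hV : ‖V - c • v‖ ≤ ε) (hεc : ε < c) :
    V ≠ 0 ∧ Real.sqrt (1 - (⟪V, v⟫ / ‖V‖) ^ 2) ≤ ε / (c - ε) := by
  have hcv : ‖c • v‖ = c := by
    rw [norm_smul, hv, mul_one, Real.norm_eq_abs, abs_of_pos ((norm_nonneg _).trans_lt
      (hV.trans_lt hεc))]
  have hlow : c - ε ≤ ‖V‖ := by
    have := norm_sub_norm_le (c • v) V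
    rw [hcv, norm_sub_rev] at this
    linarith
  have hV0 : V ≠ 0 := norm_pos_iff.mp (lt_of_lt_of_le (sub_pos.mpr hεc) hlow)
  refine ⟨hV0, (sqrt_one_sub_sq_inner_div_norm_le hv hV0 c).trans ?_⟩
  exact div_le_div₀ ((norm_nonneg _).trans hV) hV (sub_pos.mpr hεc) hlow

end Angle

theorem stmt12_general {n : ℕ} (σstar : ℝ) (hσstar : 0 < σstar)
    (ustar vstar u : Fin n → ℝ)
    (hvstar : ∑ i, (vstar i) ^ 2 = 1)
    (δ1 : ℝ) (hδ1 : δ1 ∈ Set.Ioc (0 : ℝ) (1 / 20))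
    (B : Matrix (Fin n) (Fin n) ℝ) (hB : specNorm (B - 1) ≤ δ1)
    (E : Fin n → ℝ)
    (hE : Real.sqrt (∑ i, (E i) ^ 2) ≤
      δ1 * Real.sqrt (1 - (∑ i, u i * ustar i) ^ 2))
    (y : Fin n → ℝ) (e : ℝ) (he : 0 ≤ e)
    (hy : Real.sqrt (∑ i, (y i) ^ 2) ≤ σstar * e)
    (hgap : 1 / 2 ≤ (∑ i, u i * ustar i)
      - 2 * δ1 * Real.sqrt (1 - (∑ i, u i * ustar i) ^ 2) - 2 * e)
    (vhat : Fin n → ℝ)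
    (hvhat : vhat = fun i => σstar * (∑ k, u k * ustar k) * vstar i
      - σstar * (B⁻¹ *ᵥ E) i + (B⁻¹ *ᵥ y) i) :
    vhat ≠ 0 ∧
      Real.sqrt (1 - ((∑ i, vhat i * vstar i) / Real.sqrt (∑ i, (vhat i) ^ 2)) ^ 2) ≤
        5 * (δ1 * Real.sqrt (1 - (∑ i, u i * ustar i) ^ 2) + e) := by
  obtain ⟨hδ0, hδle⟩ := hδ1
  set lam := ∑ i, u i * ustar i
  set t := δ1 * Real.sqrt (1 - lam ^ 2) + e with ht_def
  have ht : 0 ≤ t := by positivity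
  have hlam : 1 / 2 ≤ lam - 2 * t := by linarith
  have hv : ‖toLp 2 vstar‖ = 1 := by rw [norm_toLp_eq_sqrt_sum_sq, hvstar, Real.sqrt_one]
  have hw : ‖toLp 2 (y - σstar • E)‖ ≤ σstar * t := by
    rw [toLp_sub, toLp_smul]
    refine (norm_sub_le _ _).trans ?_
    rw [norm_smul, Real.norm_eq_abs, abs_of_pos hσstar, norm_toLp_eq_sqrt_sum_sq,
      norm_toLp_eq_sqrt_sum_sq]
    nlinarith [mul_le_mul_of_nonneg_left hE hσstar.le]
  have hr : ‖toLp 2 vhat - (σstar * lam) • toLp 2 vstar‖ ≤ 2 * σstar * t := by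
    have hdecomp : vhat - (σstar * lam) • vstar = B⁻¹ *ᵥ (y - σstar • E) := by
      ext i
      simp only [hvhat, Pi.sub_apply, Pi.smul_apply, smul_eq_mul, mulVec_sub, mulVec_smul]
      ring
    rw [← toLp_smul, ← toLp_sub, hdecomp]
    have hinv := one_sub_mul_norm_inv_mulVec_le hB (by linarith) (y - σstar • E)
    nlinarith [norm_nonneg (toLp 2 (B⁻¹ *ᵥ (y - σstar • E)))]
  obtain ⟨hV0, hsin⟩ := ne_zero_and_sqrt_one_sub_sq_inner_div_norm_le hv hr (by nlinarith)
  refine ⟨fun h => hV0 (by simp [h]), ?_⟩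
  rw [← inner_toLp_eq_sum_mul, ← norm_toLp_eq_sqrt_sum_sq]
  refine hsin.trans ((div_le_iff₀ (by nlinarith)).mpr ?_)
  nlinarith [mul_le_mul_of_nonneg_left hlam (by positivity : 0 ≤ σstar * t)]

theorem stmt12 {n : ℕ} (σstar : ℝ) (hσstar : 0 < σstar)
    (ustar vstar u : Fin n → ℝ)
    (hustar : ∑ i, (ustar i) ^ 2 = 1) (hvstar : ∑ i, (vstar i) ^ 2 = 1)
    (hu : ∑ i, (u i) ^ 2 = 1)
    (δ1 : ℝ) (hδ1 : δ1 ∈ Set.Ioc (0 : ℝ) (1 / 20))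
    (B : Matrix (Fin n) (Fin n) ℝ) (hB : specNorm (B - 1) ≤ δ1)
    (E : Fin n → ℝ)
    (hE : Real.sqrt (∑ i, (E i) ^ 2) ≤
      δ1 * Real.sqrt (1 - (∑ i, u i * ustar i) ^ 2))
    (y : Fin n → ℝ) (e : ℝ) (he : 0 ≤ e)
    (hy : Real.sqrt (∑ i, (y i) ^ 2) ≤ σstar * e)
    (hgap : 1 / 2 ≤ (∑ i, u i * ustar i)
      - 2 * δ1 * Real.sqrt (1 - (∑ i, u i * ustar i) ^ 2) - 2 * e)
    (vhat : Fin n → ℝ)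
    (hvhat : vhat = fun i => σstar * (∑ k, u k * ustar k) * vstar i
      - σstar * (B⁻¹ *ᵥ E) i + (B⁻¹ *ᵥ y) i) :
    vhat ≠ 0 ∧
      Real.sqrt (1 - ((∑ i, vhat i * vstar i) / Real.sqrt (∑ i, (vhat i) ^ 2)) ^ 2) ≤
        5 * (δ1 * Real.sqrt (1 - (∑ i, u i * ustar i) ^ 2) + e) :=
  stmt12_general σstar hσstar ustar vstar u hvstar δ1 hδ1 B hB E hE y e he hy hgap vhat hvhat
end

section
/- There exists an absolute constant C₀ > 0 with the following property. Let n ≥ 2, r ≥ 1, c_1 ≥ 1, κ ≥ 1, δ_2 ∈ (0, 3r], and fix j ∈ [n]. Let q̂_{ij} ∈ (0,1] for all i ∈ [n], let U, U* ∈ ℝ^{n×r} have orthonormal columns, and assume for all i: ‖U^i‖² ≤ (16·c_1²·n/m)·q̂_{ij} and ‖U^i‖·‖(U*)^i‖ ≤ (8·c_1·κ·√r·n/m)·q̂_{ij}, where U^i, (U*)^i are the i-th rows. Let (δ_{ij})_{i∈[n]} be independent {0,1}-valued random variables with P(δ_{ij}=1) = q̂_{ij}, and set B^j = ∑_i δ_{ij}·(U^i)^T·U^i/q̂_{ij}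 and C^j = ∑_i δ_{ij}·(U^i)^T·(U*)^i/q̂_{ij} (both r×r matrices). If m ≥ C₀·c_1²·κ²·r³·n·log(n)/δ_2², then with probability at least 1 − 2/n²: ‖B^j − I_r‖ ≤ δ_2 and ‖C^j − U^T U*‖ ≤ δ_2. -/
/-!
Every entry of `B − I` and of `C − UᵀU*` has the form `∑ᵢ aᵢ (δᵢ/q̂ᵢ − 1)`: a sum of independent
centred variables with weights `|aᵢ| ≤ M q̂ᵢ` (incoherence, `M = 16 c₁² κ √r n / m`) and
`∑ᵢ |aᵢ| ≤ 1` (Cauchy–Schwarz on unit columns). The bound `E exp (c (δ/q − 1)) ≤ exp (c²/q)` for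
`|c| ≤ q` and a Chernoff argument bound the probability that such a sum exceeds `ε = δ₂/r ≤ 3` in
absolute value by `2 exp (−2ε²/(9M)) ≤ 2n⁻⁵` once `m ≥ 360 c₁² κ² r³ n log n / δ₂²`. Since
`‖A‖ ≤ r · maxₖₗ |Aₖₗ|` for `r × r` matrices and `r ≤ n`, a union bound over the `2r²` entries
leaves a failure probability of at most `4r² n⁻⁵ ≤ 2/n²`.
-/

open Matrix MeasureTheory ProbabilityTheory

open Real

lemma exp_le_one_add_add_sq {x : ℝ} (hx : |x| ≤ 1) : exp x ≤ 1 + x + x ^ 2 := by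
  linarith [(abs_le.mp (abs_exp_sub_one_sub_id_le hx)).2]

/-- The left-hand side is `E exp (c (Y/q − 1))` for `Y ~ Bernoulli(q)`. -/
lemma one_sub_mul_exp_neg_add_mul_exp_le {q c : ℝ} (hq0 : 0 < q) (hq1 : q ≤ 1) (hc : |c| ≤ q) :
    (1 - q) * exp (-c) + q * exp (c * (1 - q) / q) ≤ exp (c ^ 2 / q) := by
  have h₀ : exp (-c) ≤ 1 + -c + (-c) ^ 2 :=
    exp_le_one_add_add_sq (by rw [abs_neg]; linarith)
  have h₁ : exp (c * (1 - q) / q) ≤ 1 + c * (1 - q) / q + (c * (1 - q) / q) ^ 2 := by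
    refine exp_le_one_add_add_sq ?_
    rw [abs_div, abs_mul, abs_of_nonneg (sub_nonneg.mpr hq1), abs_of_pos hq0, div_le_one hq0]
    nlinarith [abs_nonneg c]
  calc (1 - q) * exp (-c) + q * exp (c * (1 - q) / q)
      ≤ (1 - q) * (1 + -c + (-c) ^ 2) + q * (1 + c * (1 - q) / q + (c * (1 - q) / q) ^ 2) := by
        gcongr
    _ = 1 + c ^ 2 / q - c ^ 2 := by field_simp; ring
    _ ≤ 1 + c ^ 2 / q := by linarith [sq_nonneg c]
    _ ≤ exp (c ^ 2 / q) := by linarith [add_one_le_exp (c ^ 2 / q)]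

section ZeroOne

variable {Ω : Type*} [MeasurableSpace Ω] {μ : Measure Ω} [IsProbabilityMeasure μ] {Y : Ω → ℝ}
  {q : ℝ}

lemma integrable_comp_and_integral_comp_of_zero_or_one (hY : Measurable Y)
    (h01 : ∀ ω, Y ω = 0 ∨ Y ω = 1) (hq0 : 0 ≤ q) (hq : μ {ω | Y ω = 1} = ENNReal.ofReal q)
    (g : ℝ → ℝ) :
    Integrable (fun ω => g (Y ω)) μ ∧ ∫ ω, g (Y ω) ∂μ = (1 - q) * g 0 + q * g 1 := by
  have hS : MeasurableSet {ω | Y ω = 1} := hY (measurableSet_singleton 1)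
  have hg : (fun ω => g (Y ω)) =
      fun ω => g 0 + {ω | Y ω = 1}.indicator (fun _ => g 1 - g 0) ω := by
    funext ω
    rcases h01 ω with h | h <;> simp [h]
  rw [hg]
  refine ⟨(integrable_const _).add ((integrable_const _).indicator hS), ?_⟩
  rw [integral_add (integrable_const _) ((integrable_const _).indicator hS), integral_const,
    integral_indicator_const _ hS]
  simp only [measureReal_def, hq, ENNReal.toReal_ofReal hq0, measure_univ, ENNReal.toReal_one,
    smul_eq_mul]
  ring

lemma mgf_mul_div_sub_one_le (hY : Measurable Y) (h01 : ∀ ω, Y ω = 0 ∨ Y ω = 1) (hq0 : 0 < q)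
    (hq : μ {ω | Y ω = 1} = ENNReal.ofReal q) {a s : ℝ} (has : |s * a| ≤ q) :
    mgf (fun ω => a * (Y ω / q - 1)) μ s ≤ exp ((s * a) ^ 2 / q) := by
  have hq1 : q ≤ 1 := by
    simpa [hq] using prob_le_one (μ := μ) (s := {ω | Y ω = 1})
  calc mgf (fun ω => a * (Y ω / q - 1)) μ s
      = (1 - q) * exp (-(s * a)) + q * exp (s * a * (1 - q) / q) := by
        rw [mgf, (integrable_comp_and_integral_comp_of_zero_or_one hY h01 hq0.le hq
          (fun y => exp (s * (a * (y / q - 1))))).2]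
        congr 3
        · ring
        · field_simp
    _ ≤ exp ((s * a) ^ 2 / q) := one_sub_mul_exp_neg_add_mul_exp_le hq0 hq1 has

end ZeroOne

lemma specNorm_le_sqrt_sum_sq {n₁ n₂ : ℕ} (A : Matrix (Fin n₁) (Fin n₂) ℝ) :
    specNorm A ≤ √(∑ k, ∑ l, A k l ^ 2) := by
  refine ContinuousLinearMap.opNorm_le_bound _ (sqrt_nonneg _) fun x => ?_
  change ‖toEuclideanLin A x‖ ≤ _
  simp only [EuclideanSpace.norm_eq, ofLp_toLpLin, toLin'_apply, mulVec, dotProduct, norm_eq_abs,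
    sq_abs]
  rw [← sqrt_mul (by positivity), Finset.sum_mul]
  gcongr with k
  exact Finset.sum_mul_sq_le_sq_mul_sq _ _ _

lemma specNorm_le_of_abs_le {n₁ n₂ : ℕ} (A : Matrix (Fin n₁) (Fin n₂) ℝ) {ε : ℝ} (hε : 0 ≤ ε)
    (h : ∀ k l, |A k l| ≤ ε) : specNorm A ≤ √(n₁ * n₂) * ε := by
  refine (specNorm_le_sqrt_sum_sq A).trans ?_
  calc √(∑ k, ∑ l, A k l ^ 2) ≤ √(∑ _k : Fin n₁, ∑ _l : Fin n₂, ε ^ 2) := by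
        refine sqrt_le_sqrt (Finset.sum_le_sum fun k _ => Finset.sum_le_sum fun l _ => ?_)
        exact sq_le_sq' (abs_le.mp (h k l)).1 (abs_le.mp (h k l)).2
    _ = √(n₁ * n₂) * ε := by
        simp only [Finset.sum_const, Finset.card_univ, Fintype.card_fin, nsmul_eq_mul]
        rw [← mul_assoc, sqrt_mul (by positivity), sqrt_sq hε]

lemma sum_smul_of_mul_sub_transpose_mul_apply {ι m n : Type*} [Fintype ι] (x : ι → ℝ)
    (W : Matrix ι m ℝ) (V : Matrix ι n ℝ) (k : m) (l : n) :
    (∑ i, x i • of (fun k l => W i k * V i l) - Wᵀ * V) k l = ∑ i, W i k * V i l * (x i - 1) := by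
  simp only [Matrix.sub_apply, Matrix.sum_apply, Matrix.smul_apply, of_apply, smul_eq_mul,
    mul_apply, transpose_apply, ← Finset.sum_sub_distrib]
  exact Finset.sum_congr rfl fun i _ => by ring

lemma sum_abs_mul_le_one {ι : Type*} [Fintype ι] {x y : ι → ℝ} (hx : ∑ i, x i ^ 2 ≤ 1)
    (hy : ∑ i, y i ^ 2 ≤ 1) : ∑ i, |x i * y i| ≤ 1 := by
  calc ∑ i, |x i * y i| = ∑ i, |x i| * |y i| := by simp only [abs_mul]
    _ ≤ √(∑ i, |x i| ^ 2) * √(∑ i, |y i| ^ 2) := Real.sum_mul_le_sqrt_mul_sqrt _ _ _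
    _ ≤ 1 := by
        simp only [sq_abs]
        exact mul_le_one₀ (sqrt_le_one.mpr hx) (sqrt_nonneg _) (sqrt_le_one.mpr hy)

lemma abs_mul_le_sqrt_sum_sq_mul_sqrt_sum_sq {ι : Type*} [Fintype ι] (x y : ι → ℝ) (k l : ι) :
    |x k * y l| ≤ √(∑ i, x i ^ 2) * √(∑ i, y i ^ 2) := by
  rw [abs_mul]
  gcongr <;> exact abs_le_sqrt (Finset.single_le_sum (fun i _ => sq_nonneg _) (Finset.mem_univ _))

lemma sum_sq_eq_one_of_transpose_mul_self_eq_one {m n : Type*} [Fintype m] [DecidableEq n]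
    {U : Matrix m n ℝ} (hU : Uᵀ * U = 1) (k : n) : ∑ i, U i k ^ 2 = 1 := by
  simpa [mul_apply, sq] using congrFun (congrFun hU k) k

lemma card_le_of_transpose_mul_self_eq_one {m n : Type*} [Fintype m] [Fintype n] [DecidableEq n]
    {U : Matrix m n ℝ} (hU : Uᵀ * U = 1) : Fintype.card n ≤ Fintype.card m := by
  calc Fintype.card n = (Uᵀ * U).rank := by rw [hU, rank_one]
    _ ≤ Uᵀ.rank := rank_mul_le_left _ _
    _ ≤ Fintype.card m := rank_le_card_width _

structure IsBernoulliFamily {Ω ι : Type*} [MeasurableSpace Ω] (X : ι → Ω → ℝ) (q : ι → ℝ)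
    (μ : Measure Ω) : Prop where
  measurable : ∀ i, Measurable (X i)
  zero_or_one : ∀ i ω, X i ω = 0 ∨ X i ω = 1
  indep : iIndepFun X μ
  measure_eq_one : ∀ i, μ {ω | X i ω = 1} = ENNReal.ofReal (q i)
  pos : ∀ i, 0 < q i

namespace IsBernoulliFamily

variable {Ω ι : Type*} [MeasurableSpace Ω] {μ : Measure Ω} {X : ι → Ω → ℝ} {q : ι → ℝ}

lemma measurable_deviation (hX : IsBernoulliFamily X q μ) (a : ι → ℝ) (i : ι) :
    Measurable fun ω => a i * (X i ω / q i - 1) :=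
  (((hX.measurable i).div_const _).sub_const 1).const_mul _

lemma iIndepFun_deviation (hX : IsBernoulliFamily X q μ) (a : ι → ℝ) :
    iIndepFun (fun i ω => a i * (X i ω / q i - 1)) μ :=
  hX.indep.comp (fun i x => a i * (x / q i - 1)) (by fun_prop)

variable [IsProbabilityMeasure μ] [Fintype ι]

lemma integrable_exp_mul_sum (hX : IsBernoulliFamily X q μ) (a : ι → ℝ) (s : ℝ) :
    Integrable (fun ω => exp (s * ∑ i, a i * (X i ω / q i - 1))) μ := by
  simpa using (hX.iIndepFun_deviation a).integrable_exp_mul_sum (hX.measurable_deviation a)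
    (s := Finset.univ) fun i _ => (integrable_comp_and_integral_comp_of_zero_or_one
      (hX.measurable i) (hX.zero_or_one i) (hX.pos i).le (hX.measure_eq_one i)
      (fun x => exp (s * (a i * (x / q i - 1))))).1

lemma mgf_sum_le (hX : IsBernoulliFamily X q μ) (a : ι → ℝ) {s : ℝ}
    (has : ∀ i, |s * a i| ≤ q i) :
    mgf (fun ω => ∑ i, a i * (X i ω / q i - 1)) μ s ≤ exp (s ^ 2 * ∑ i, a i ^ 2 / q i) := by
  calc mgf (fun ω => ∑ i, a i * (X i ω / q i - 1)) μ s
      = ∏ i, mgf (fun ω => a i * (X i ω / q i - 1)) μ s := by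
        rw [← (hX.iIndepFun_deviation a).mgf_sum (hX.measurable_deviation a)]
        congr 1; ext ω; simp
    _ ≤ ∏ i, exp ((s * a i) ^ 2 / q i) :=
        Finset.prod_le_prod (fun i _ => mgf_nonneg) fun i _ => mgf_mul_div_sub_one_le
          (hX.measurable i) (hX.zero_or_one i) (hX.pos i) (hX.measure_eq_one i) (has i)
    _ = exp (s ^ 2 * ∑ i, a i ^ 2 / q i) := by
        rw [← exp_sum, Finset.mul_sum]; congr 1; refine Finset.sum_congr rfl fun i _ => ?_; ring

lemma measure_sum_deviation_ge_le (hX : IsBernoulliFamily X q μ) (a : ι → ℝ) {M t : ℝ}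
    (hM : 0 < M) (ha : ∀ i, |a i| ≤ M * q i) (ha1 : ∑ i, |a i| ≤ 1) (ht0 : 0 ≤ t)
    (ht3 : t ≤ 3) :
    μ {ω | t ≤ ∑ i, a i * (X i ω / q i - 1)} ≤
      ENNReal.ofReal (exp (-(2 * t ^ 2 / (9 * M)))) := by
  -- Chernoff at `s = t/(3M)`: `t ≤ 3` keeps every `|s aᵢ| ≤ qᵢ`, the range of the mgf estimate.
  set s := t / (3 * M) with hs_def
  have hs : 0 ≤ s := by positivity
  have has : ∀ i, |s * a i| ≤ q i := fun i => by
    rw [abs_mul, abs_of_nonneg hs]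
    calc s * |a i| ≤ s * (M * q i) := by gcongr; exact ha i
      _ = t / 3 * q i := by rw [hs_def]; field_simp
      _ ≤ q i := by nlinarith [(hX.pos i).le]
  have hvar : ∑ i, a i ^ 2 / q i ≤ M := by
    calc ∑ i, a i ^ 2 / q i ≤ ∑ i, M * |a i| := Finset.sum_le_sum fun i _ => by
          rw [div_le_iff₀ (hX.pos i), ← sq_abs]
          nlinarith [ha i, abs_nonneg (a i)]
      _ ≤ M := by rw [← Finset.mul_sum]; nlinarith
  rw [← ofReal_measureReal]
  refine ENNReal.ofReal_le_ofReal ?_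
  calc μ.real {ω | t ≤ ∑ i, a i * (X i ω / q i - 1)}
      ≤ exp (-s * t) * mgf (fun ω => ∑ i, a i * (X i ω / q i - 1)) μ s :=
        measure_ge_le_exp_mul_mgf t hs (hX.integrable_exp_mul_sum a s)
    _ ≤ exp (-s * t) * exp (s ^ 2 * M) := by
        gcongr
        exact (hX.mgf_sum_le a has).trans (by gcongr)
    _ = exp (-(2 * t ^ 2 / (9 * M))) := by
        rw [← exp_add, hs_def]; congr 1; field_simp; ring

lemma measure_abs_sum_deviation_gt_le (hX : IsBernoulliFamily X q μ) (a : ι → ℝ) {M t : ℝ}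
    (hM : 0 < M) (ha : ∀ i, |a i| ≤ M * q i) (ha1 : ∑ i, |a i| ≤ 1) (ht0 : 0 ≤ t)
    (ht3 : t ≤ 3) :
    μ {ω | t < |∑ i, a i * (X i ω / q i - 1)|} ≤
      2 * ENNReal.ofReal (exp (-(2 * t ^ 2 / (9 * M)))) := by
  have hpos := hX.measure_sum_deviation_ge_le a hM ha ha1 ht0 ht3
  have hneg := hX.measure_sum_deviation_ge_le (fun i => -a i) hM (by simpa using ha)
    (by simpa using ha1) ht0 ht3
  simp only [neg_mul, Finset.sum_neg_distrib] at hneg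
  calc μ {ω | t < |∑ i, a i * (X i ω / q i - 1)|}
      ≤ μ ({ω | t ≤ ∑ i, a i * (X i ω / q i - 1)} ∪
          {ω | t ≤ -∑ i, a i * (X i ω / q i - 1)}) := by
        refine measure_mono fun ω hω => ?_
        simp only [Set.mem_ofPred_eq, Set.mem_union] at hω ⊢
        rcases lt_abs.mp hω with h | h
        · exact Or.inl h.le
        · exact Or.inr h.le
    _ ≤ _ := (measure_union_le _ _).trans
        (by rw [two_mul]; exact add_le_add hpos hneg)

lemma measure_lt_specNorm_sub_le (hX : IsBernoulliFamily X q μ) {r₁ r₂ : ℕ}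
    (W : Matrix ι (Fin r₁) ℝ) (V : Matrix ι (Fin r₂) ℝ) (hW : ∀ k, ∑ i, W i k ^ 2 ≤ 1)
    (hV : ∀ l, ∑ i, V i l ^ 2 ≤ 1) {M ε : ℝ} (hM : 0 < M)
    (hWV : ∀ i k l, |W i k * V i l| ≤ M * q i) (hε0 : 0 ≤ ε) (hε3 : ε ≤ 3) :
    μ {ω | √(r₁ * r₂) * ε <
        specNorm (∑ i, (X i ω / q i) • of (fun k l => W i k * V i l) - Wᵀ * V)} ≤
      ENNReal.ofReal (2 * r₁ * r₂ * exp (-(2 * ε ^ 2 / (9 * M)))) := by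
  set e := ENNReal.ofReal (exp (-(2 * ε ^ 2 / (9 * M))))
  calc μ {ω | √(r₁ * r₂) * ε <
        specNorm (∑ i, (X i ω / q i) • of (fun k l => W i k * V i l) - Wᵀ * V)}
      ≤ μ (⋃ k, ⋃ l, {ω | ε < |∑ i, W i k * V i l * (X i ω / q i - 1)|}) := by
        refine measure_mono fun ω hω => ?_
        by_contra hgood
        simp only [Set.mem_iUnion, Set.mem_ofPred_eq, not_exists, not_lt] at hω hgood
        refine hω.not_ge (specNorm_le_of_abs_le _ hε0 fun k l => ?_)
        rw [sum_smul_of_mul_sub_transpose_mul_apply]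
        exact hgood k l
    _ ≤ ∑ _k : Fin r₁, ∑ _l : Fin r₂, 2 * e := by
        refine (measure_iUnion_fintype_le _ _).trans (Finset.sum_le_sum fun k _ => ?_)
        refine (measure_iUnion_fintype_le _ _).trans (Finset.sum_le_sum fun l _ => ?_)
        exact hX.measure_abs_sum_deviation_gt_le _ hM (hWV · k l)
          (sum_abs_mul_le_one (hW k) (hV l)) hε0 hε3
    _ = ENNReal.ofReal (2 * r₁ * r₂ * exp (-(2 * ε ^ 2 / (9 * M)))) := by
        simp only [Finset.sum_const, Finset.card_univ, Fintype.card_fin, nsmul_eq_mul, e]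
        rw [ENNReal.ofReal_mul (by positivity), ENNReal.ofReal_mul (by positivity),
          ENNReal.ofReal_mul (by positivity)]
        simp only [ENNReal.ofReal_natCast, ENNReal.ofReal_ofNat]
        ring

end IsBernoulliFamily

lemma ofReal_one_sub_two_mul_le_measure_and {Ω : Type*} [MeasurableSpace Ω] {μ : Measure Ω}
    [IsProbabilityMeasure μ] {P Q : Ω → Prop} {a : ℝ} (ha : 0 ≤ a)
    (hP : μ {ω | ¬P ω} ≤ ENNReal.ofReal a) (hQ : μ {ω | ¬Q ω} ≤ ENNReal.ofReal a) :
    ENNReal.ofReal (1 - 2 * a) ≤ μ {ω | P ω ∧ Q ω} := by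
  have hcompl : {ω | P ω ∧ Q ω}ᶜ = {ω | ¬P ω} ∪ {ω | ¬Q ω} := by ext ω; simp [imp_iff_not_or]
  calc ENNReal.ofReal (1 - 2 * a) = 1 - (ENNReal.ofReal a + ENNReal.ofReal a) := by
        rw [← ENNReal.ofReal_add ha ha, ← ENNReal.ofReal_one,
          ← ENNReal.ofReal_sub _ (by positivity)]
        ring_nf
    _ ≤ 1 - μ {ω | P ω ∧ Q ω}ᶜ := by
        gcongr
        rw [hcompl]
        exact (measure_union_le _ _).trans (add_le_add hP hQ)
    _ ≤ μ {ω | P ω ∧ Q ω} := by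
        rw [tsub_le_iff_right, ← measure_univ (μ := μ)]
        exact measure_univ_le_add_compl _

/-- The exponent `2ε²/(9M)` of the entrywise tail at `ε = δ/r`, `M = 16 c₁² κ √r n / m`. -/
lemma five_mul_log_le_div {n r c1 κ δ m : ℝ} (hr : 1 ≤ r) (hn : 0 < n) (hlog : 0 < log n)
    (hc1 : 0 < c1) (hκ : 1 ≤ κ) (hδ : 0 < δ) (hm0 : 0 < m)
    (hm : 360 * c1 ^ 2 * κ ^ 2 * r ^ 3 * n * log n / δ ^ 2 ≤ m) :
    5 * log n ≤ 2 * (δ / r) ^ 2 / (9 * (16 * c1 ^ 2 * κ * √r * n / m)) := by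
  have hsqrt : √r ≤ κ * r :=
    (sqrt_le_self_iff.mpr (Or.inr hr)).trans (le_mul_of_one_le_left (by linarith) hκ)
  rw [div_le_iff₀ (by positivity)] at hm
  rw [le_div_iff₀ (by positivity)]
  calc 5 * log n * (9 * (16 * c1 ^ 2 * κ * √r * n / m))
      = 720 * c1 ^ 2 * κ * √r * n * log n / m := by ring
    _ ≤ 720 * c1 ^ 2 * κ * (κ * r) * n * log n / m := by gcongr
    _ ≤ 2 * (δ / r) ^ 2 := by
        rw [div_le_iff₀ hm0]
        field_simp
        nlinarith

lemma two_mul_mul_exp_neg_le {n r E : ℝ} (hn : 2 ≤ n) (hr : 0 ≤ r) (hrn : r ≤ n)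
    (hE : 5 * log n ≤ E) : 2 * r * r * exp (-E) ≤ 1 / n ^ 2 := by
  have hn0 : 0 < n := by linarith
  have hexp : exp (-E) ≤ 1 / n ^ 5 := by
    calc exp (-E) ≤ exp (-log (n ^ 5)) := by rw [log_pow]; push_cast; gcongr
      _ = 1 / n ^ 5 := by rw [exp_neg, exp_log (by positivity), one_div]
  calc 2 * r * r * exp (-E) ≤ 2 * n * n * (1 / n ^ 5) := by gcongr
    _ = 2 / n * (1 / n ^ 2) := by field_simp
    _ ≤ 1 / n ^ 2 := mul_le_of_le_one_left (by positivity) ((div_le_one hn0).mpr hn)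

lemma abs_mul_le_of_incoherence {n r : ℕ} {U Ustar : Matrix (Fin n) (Fin r) ℝ} {c1 κ m : ℝ}
    {q : Fin n → ℝ} (hc1 : 1 ≤ c1) (hκ : 1 ≤ κ) (hr : 1 ≤ r) (hm : 0 < m) (hq : ∀ i, 0 ≤ q i)
    (hU : ∀ i, ∑ k, U i k ^ 2 ≤ 16 * c1 ^ 2 * n / m * q i)
    (hUUs : ∀ i, √(∑ k, U i k ^ 2) * √(∑ k, Ustar i k ^ 2) ≤ 8 * c1 * κ * √r * n / m * q i)
    (i : Fin n) (k l : Fin r) :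
    |U i k * U i l| ≤ 16 * c1 ^ 2 * κ * √r * n / m * q i ∧
      |U i k * Ustar i l| ≤ 16 * c1 ^ 2 * κ * √r * n / m * q i := by
  have hsqrt : 1 ≤ √(r : ℝ) := one_le_sqrt.mpr (by exact_mod_cast hr)
  constructor
  · calc |U i k * U i l| ≤ √(∑ k, U i k ^ 2) * √(∑ k, U i k ^ 2) :=
          abs_mul_le_sqrt_sum_sq_mul_sqrt_sum_sq _ _ k l
      _ = ∑ k, U i k ^ 2 := mul_self_sqrt (by positivity)
      _ ≤ 16 * c1 ^ 2 * 1 * 1 * n / m * q i := by simpa using hU i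
      _ ≤ 16 * c1 ^ 2 * κ * √r * n / m * q i := by gcongr; exact hq i
  · calc |U i k * Ustar i l| ≤ √(∑ k, U i k ^ 2) * √(∑ k, Ustar i k ^ 2) :=
          abs_mul_le_sqrt_sum_sq_mul_sqrt_sum_sq _ _ k l
      _ ≤ 8 * c1 * 1 * κ * √r * n / m * q i := by simpa using hUUs i
      _ ≤ 8 * c1 * (2 * c1) * κ * √r * n / m * q i := by gcongr; exacts [hq i, by linarith]
      _ = 16 * c1 ^ 2 * κ * √r * n / m * q i := by ring

theorem stmt13 : ∃ C0 : ℝ, 0 < C0 ∧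
    ∀ (n r : ℕ), 2 ≤ n → ∀ _hr : 1 ≤ r,
    ∀ (c1 κ : ℝ), 1 ≤ c1 → 1 ≤ κ →
    ∀ (δ2 : ℝ), δ2 ∈ Set.Ioc (0 : ℝ) (3 * r) →
    ∀ (j : Fin n) (qhat : Fin n → Fin n → ℝ), (∀ i, qhat i j ∈ Set.Ioc (0 : ℝ) 1) →
    ∀ (U Ustar : Matrix (Fin n) (Fin r) ℝ), Uᵀ * U = 1 → Ustarᵀ * Ustar = 1 →
    ∀ (m : ℝ),
      (∀ i, (∑ k, (U i k) ^ 2) ≤ (16 * c1 ^ 2 * n / m) * qhat i j) →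
      (∀ i, Real.sqrt (∑ k, (U i k) ^ 2) * Real.sqrt (∑ k, (Ustar i k) ^ 2) ≤
        (8 * c1 * κ * Real.sqrt r * n / m) * qhat i j) →
    ∀ (Ω : Type) [MeasureSpace Ω] [IsProbabilityMeasure (ℙ : Measure Ω)]
      (X : Fin n → Ω → ℝ),
      (∀ i, Measurable (X i)) →
      (∀ i ω, X i ω = 0 ∨ X i ω = 1) →
      iIndepFun X ℙ →
      (∀ i, ℙ {ω | X i ω = 1} = ENNReal.ofReal (qhat i j)) →
      C0 * c1 ^ 2 * κ ^ 2 * r ^ 3 * n * Real.log n / δ2 ^ 2 ≤ m →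
      ENNReal.ofReal (1 - 2 / (n : ℝ) ^ 2) ≤
        ℙ {ω |
          specNorm ((∑ i, (X i ω / qhat i j) •
              Matrix.of (fun k l : Fin r => U i k * U i l)) - 1) ≤ δ2 ∧
          specNorm ((∑ i, (X i ω / qhat i j) •
              Matrix.of (fun k l : Fin r => U i k * Ustar i l)) - Uᵀ * Ustar) ≤ δ2} := by
  refine ⟨360, by norm_num, ?_⟩
  intro n r hn hr c1 κ hc1 hκ δ2 ⟨hδ0, hδ3⟩ j qhat hq U Ustar hU hUstar m hUrow hUUrow Ω _ _ X
    hXm hX01 hXind hXq hm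
  have hr1 : (1 : ℝ) ≤ r := by exact_mod_cast hr
  have hlog : 0 < log n := log_pos (by exact_mod_cast hn)
  have hm0 : 0 < m := lt_of_lt_of_le (by positivity) hm
  have hX : IsBernoulliFamily X (qhat · j) ℙ := ⟨hXm, hX01, hXind, hXq, fun i => (hq i).1⟩
  have hcoef := abs_mul_le_of_incoherence hc1 hκ hr hm0 (fun i => (hq i).1.le) hUrow hUUrow
  have hcol k := (sum_sq_eq_one_of_transpose_mul_self_eq_one hU k).le
  have hcol' k := (sum_sq_eq_one_of_transpose_mul_self_eq_one hUstar k).le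
  have hε3 : δ2 / r ≤ 3 := (div_le_iff₀ (by positivity)).mpr (by linarith)
  have hB := hX.measure_lt_specNorm_sub_le U U hcol hcol (by positivity)
    (fun i k l => (hcoef i k l).1) (by positivity) hε3
  have hC := hX.measure_lt_specNorm_sub_le U Ustar hcol hcol' (by positivity)
    (fun i k l => (hcoef i k l).2) (by positivity) hε3
  have hδ : √(r * r) * (δ2 / r) = δ2 := by rw [sqrt_mul_self (by positivity)]; field_simp
  simp only [hδ, hU, ← not_le] at hB hC
  have hrn : (r : ℝ) ≤ n := by
    simpa using (Nat.cast_le (α := ℝ)).mpr (card_le_of_transpose_mul_self_eq_one hU)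
  have hsmall := two_mul_mul_exp_neg_le (by exact_mod_cast hn) (by positivity) hrn
    (five_mul_log_le_div hr1 (by positivity) hlog (by positivity) hκ hδ0 hm0 hm)
  refine (ENNReal.ofReal_le_ofReal ?_).trans
    (ofReal_one_sub_two_mul_le_measure_and (by positivity) hB hC)
  rw [← mul_one_div 2]
  linarith
end

section
/- Let A ∈ ℝ^{n×d} and B ∈ ℝ^{d×n} be nonzero matrices and let m > 0. Define the product sampling probabilities q_{ij} = m·(‖A^i‖²/(n‖A‖_F²) + ‖B_j‖²/(n‖B‖_F²)), where A^i is the i-th row of A and B_j the j-th column of B. Then for every i ∈ [n] with A^i ≠ 0 (so that q_{ij} > 0 for all j): ∑_{j=1}^n (A·B)_{ij}²/q_{ij} ≤ (n/m)·(‖A‖_F² + ‖B‖_F²)². -/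
open Matrix

/-- The sampling weights `q_{ij}` for the product `A·B` of an `n×d` and a `d×n` matrix,
with sample budget `m`. -/
noncomputable def sampProdQ {n d : ℕ} (A : Matrix (Fin n) (Fin d) ℝ)
    (B : Matrix (Fin d) (Fin n) ℝ) (m : ℝ) (i j : Fin n) : ℝ :=
  m * ((∑ k, (A i k) ^ 2) / (n * frobNorm A ^ 2)
    + (∑ k, (B k j) ^ 2) / (n * frobNorm B ^ 2))

theorem stmt17 {n d : ℕ} (A : Matrix (Fin n) (Fin d) ℝ) (B : Matrix (Fin d) (Fin n) ℝ)
    (hA : A ≠ 0) (hB : B ≠ 0) (m : ℝ) (hm : 0 < m) (i : Fin n) (hi : A i ≠ 0) :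
    ∑ j, ((A * B) i j) ^ 2 / sampProdQ A B m i j ≤
      (n / m) * (frobNorm A ^ 2 + frobNorm B ^ 2) ^ 2 := by
  set SA : ℝ := ∑ i', ∑ k, (A i' k) ^ 2 with hSA
  set SB : ℝ := ∑ k, ∑ j, (B k j) ^ 2 with hSB
  have hSAnn : (0:ℝ) ≤ SA := Finset.sum_nonneg fun _ _ =>
    Finset.sum_nonneg fun _ _ => sq_nonneg _
  have hSBnn : (0:ℝ) ≤ SB := Finset.sum_nonneg fun _ _ =>
    Finset.sum_nonneg fun _ _ => sq_nonneg _
  have hfA : frobNorm A ^ 2 = SA := Real.sq_sqrt hSAnn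
  have hfB : frobNorm B ^ 2 = SB := Real.sq_sqrt hSBnn
  -- a_i > 0
  obtain ⟨k₀, hk₀⟩ : ∃ k, A i k ≠ 0 := by
    by_contra h; push_neg at h; exact hi (funext h)
  have ha : (0:ℝ) < ∑ k, (A i k) ^ 2 :=
    Finset.sum_pos' (fun _ _ => sq_nonneg _)
      ⟨k₀, Finset.mem_univ _, by positivity⟩
  have hSApos : (0:ℝ) < SA :=
    lt_of_lt_of_le ha (Finset.single_le_sum
      (f := fun i' => ∑ k, (A i' k)^2)
      (fun _ _ => Finset.sum_nonneg fun _ _ => sq_nonneg _) (Finset.mem_univ i))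
  have hSBpos : (0:ℝ) < SB := by
    obtain ⟨k₁, j₁, h1⟩ : ∃ k j, B k j ≠ 0 := by
      by_contra h; push_neg at h; exact hB (by ext k j; exact h k j)
    refine Finset.sum_pos' (fun _ _ => Finset.sum_nonneg fun _ _ => sq_nonneg _)
      ⟨k₁, Finset.mem_univ _, Finset.sum_pos' (fun _ _ => sq_nonneg _)
        ⟨j₁, Finset.mem_univ _, by positivity⟩⟩
  have hn : (0:ℝ) < n := by
    have : 0 < n := i.pos
    exact_mod_cast this
  -- per-term bound
  have key : ∀ j : Fin n, ((A * B) i j) ^ 2 / sampProdQ A B m i j ≤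
      (n * SA / m) * ∑ k, (B k j) ^ 2 := by
    intro j
    set a : ℝ := ∑ k, (A i k) ^ 2
    set b : ℝ := ∑ k, (B k j) ^ 2 with hb
    have hbnn : (0:ℝ) ≤ b := Finset.sum_nonneg fun _ _ => sq_nonneg _
    have hq : sampProdQ A B m i j = m * (a / (n * SA) + b / (n * SB)) := by
      rw [sampProdQ, hfA, hfB]
    have hqlb : m * (a / (n * SA)) ≤ sampProdQ A B m i j := by
      rw [hq]
      have h1 : (0:ℝ) ≤ b / (n * SB) := div_nonneg hbnn (mul_nonneg hn.le hSBnn)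
      exact mul_le_mul_of_nonneg_left (le_add_of_nonneg_right h1) hm.le
    have hqpos : (0:ℝ) < m * (a / (n * SA)) :=
      mul_pos hm (div_pos ha (mul_pos hn hSApos))
    have hcs : ((A * B) i j) ^ 2 ≤ a * b := by
      simp only [Matrix.mul_apply]
      exact Finset.sum_mul_sq_le_sq_mul_sq Finset.univ (fun k => A i k) (fun k => B k j)
    calc ((A * B) i j) ^ 2 / sampProdQ A B m i j
        ≤ (a * b) / (m * (a / (n * SA))) := by
          exact div_le_div₀ (mul_nonneg ha.le hbnn) hcs hqpos hqlb
      _ = (n * SA / m) * b := by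
          field_simp
  calc ∑ j, ((A * B) i j) ^ 2 / sampProdQ A B m i j
      ≤ ∑ j, (n * SA / m) * ∑ k, (B k j) ^ 2 := Finset.sum_le_sum fun j _ => key j
    _ = (n * SA / m) * SB := by
        rw [← Finset.mul_sum, hSB, Finset.sum_comm]
    _ ≤ (n / m) * (frobNorm A ^ 2 + frobNorm B ^ 2) ^ 2 := by
        rw [hfA, hfB]
        rw [div_mul_eq_mul_div, div_mul_eq_mul_div, div_le_div_iff₀ hm hm]
        have h1 : (0:ℝ) ≤ (SA + SB) ^ 2 - SA * SB := by nlinarith [sq_nonneg SA, sq_nonneg SB]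
        nlinarith [mul_nonneg (mul_nonneg hn.le hm.le) h1]
end
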